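/- arXiv:2603.00639 — 14 statements merged into one kernel-verified Lean document; each statement's English description precedes it below -/
import Mathlib

section
/- Let A be a 3×3 real matrix. If A is a semimonotone matrix of exact order 2 (an E0_2-matrix), then all diagonal entries of A are nonnegative and all off-diagonal entries of A are strictly negative; in particular, A is a Z-matrix. -/
open Matrix

/-- A real square matrix `A` is semimonotone if for every nonzero entrywise-nonnegative
vector `x` there is an index `i` with `x i > 0` and `(A *ᵥ x) i ≥ 0`. -/
def SemiMonotone {ι : Type*} [Fintype ι] (A : Matrix ι ι ℝ) : Prop :=
  ∀ x : ι → ℝ, x ≠ 0 → 0 ≤ x → ∃ i, 0 < x i ∧ 0 ≤ A.mulVec x i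

/-- A real square matrix `A` is strictly semimonotone if for every nonzero
entrywise-nonnegative vector `x` there is an index `i` with `x i > 0` and `(A *ᵥ x) i > 0`. -/
def StrictlySemiMonotone {ι : Type*} [Fintype ι] (A : Matrix ι ι ℝ) : Prop :=
  ∀ x : ι → ℝ, x ≠ 0 → 0 ≤ x → ∃ i, 0 < x i ∧ 0 < A.mulVec x i

/-- The principal submatrix of `A` with rows and columns indexed by `s`. -/
def PrincipalSubmatrix {n : ℕ} (A : Matrix (Fin n) (Fin n) ℝ) (s : Finset (Fin n)) :
    Matrix s s ℝ := A.submatrix (fun i => (i : Fin n)) (fun j => (j : Fin n))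

/-- `A` is a semimonotone matrix of exact order `k` (an `E0_k`-matrix): every principal
submatrix of order `n - k` is semimonotone, but no principal submatrix of order
`r` with `n - k < r ≤ n` is semimonotone. -/
def SemimonotoneExactOrder {n : ℕ} (A : Matrix (Fin n) (Fin n) ℝ) (k : ℕ) : Prop :=
  (∀ s : Finset (Fin n), s.card = n - k → SemiMonotone (PrincipalSubmatrix A s)) ∧
  (∀ s : Finset (Fin n), n - k < s.card → ¬ SemiMonotone (PrincipalSubmatrix A s))

/-- `A` is a strictly semimonotone matrix of exact order `k` (an `E_k`-matrix). -/
def StrictlySemimonotoneExactOrder {n : ℕ} (A : Matrix (Fin n) (Fin n) ℝ) (k : ℕ) : Prop :=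
  (∀ s : Finset (Fin n), s.card = n - k → StrictlySemiMonotone (PrincipalSubmatrix A s)) ∧
  (∀ s : Finset (Fin n), n - k < s.card → ¬ StrictlySemiMonotone (PrincipalSubmatrix A s))

theorem stmt0 (A : Matrix (Fin 3) (Fin 3) ℝ) (hA : SemimonotoneExactOrder A 2) :
    (∀ i, 0 ≤ A i i) ∧ (∀ i j, i ≠ j → A i j < 0) := by
  have hdiag : ∀ i, 0 ≤ A i i := by
    intro i
    have hs : ({i} : Finset (Fin 3)).card = 3 - 2 := by simp
    have h := hA.1 {i} hs (fun _ => 1) (by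
      intro h
      have := congrFun h ⟨i, Finset.mem_singleton_self i⟩
      norm_num at this) (fun _ => zero_le_one)
    obtain ⟨k, _, hk2⟩ := h
    have hk : (k : Fin 3) = i := Finset.mem_singleton.mp k.2
    have : (PrincipalSubmatrix A {i}).mulVec (fun _ => 1) k =
        A i i := by
      simp [PrincipalSubmatrix, Matrix.mulVec, dotProduct, Fintype.sum_subsingleton _ k, hk]
    rw [this] at hk2
    exact hk2
  refine ⟨hdiag, ?_⟩
  intro i j hij
  by_contra hle
  push_neg at hle
  have hcard : 3 - 2 < ({i, j} : Finset (Fin 3)).card := by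
    rw [Finset.card_pair hij]; norm_num
  apply hA.2 {i, j} hcard
  intro x hx0 hxnn
  have hi : i ∈ ({i, j} : Finset (Fin 3)) := by simp
  have hj : j ∈ ({i, j} : Finset (Fin 3)) := by simp
  set ii : ({i, j} : Finset (Fin 3)) := ⟨i, hi⟩
  set jj : ({i, j} : Finset (Fin 3)) := ⟨j, hj⟩
  have hall : ∀ k : ({i, j} : Finset (Fin 3)), k = ii ∨ k = jj := by
    rintro ⟨k, hk⟩
    rcases Finset.mem_insert.mp hk with h | h
    · exact Or.inl (Subtype.ext h)
    · exact Or.inr (Subtype.ext (Finset.mem_singleton.mp h))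
  have hsum : ∀ k : ({i, j} : Finset (Fin 3)),
      (PrincipalSubmatrix A {i, j}).mulVec x k = A k i * x ii + A k j * x jj := by
    intro k
    have : (Finset.univ : Finset ({i, j} : Finset (Fin 3))) = {ii, jj} := by
      ext l
      simp only [Finset.mem_univ, true_iff, Finset.mem_insert, Finset.mem_singleton]
      exact hall l
    simp only [PrincipalSubmatrix, Matrix.mulVec, dotProduct, Matrix.submatrix_apply, this]
    rw [Finset.sum_pair (by simp [ii, jj, Subtype.ext_iff, hij])]
  have hxi := hxnn ii
  have hxj := hxnn jj
  rw [Pi.zero_apply] at hxi hxj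
  rcases lt_or_eq_of_le hxi with hpos | heq
  · refine ⟨ii, hpos, ?_⟩
    rw [hsum ii]
    have h1 := hdiag i
    have h2 : (ii : Fin 3) = i := rfl
    rw [h2]
    nlinarith
  · have hjpos : 0 < x jj := by
      rcases lt_or_eq_of_le hxj with h | h
      · exact h
      · exfalso; apply hx0; funext k
        rcases hall k with rfl | rfl
        · exact heq.symm
        · exact h.symm
    refine ⟨jj, hjpos, ?_⟩
    rw [hsum jj, ← heq]
    have h1 := hdiag j
    have h2 : (jj : Fin 3) = j := rfl
    rw [h2]
    nlinarith
end

section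
/- Let A be a 3×3 real matrix. If A is a strictly semimonotone matrix of exact order 2 (an E_2-matrix), then all diagonal entries of A are strictly positive and all off-diagonal entries of A are strictly negative. -/
open Matrix

lemma pair_mulVec {n : ℕ} (A : Matrix (Fin n) (Fin n) ℝ) (i j : Fin n) (hij : i ≠ j)
    (x : ({i,j} : Finset (Fin n)) → ℝ) (a : Fin n) (ha : a ∈ ({i,j} : Finset (Fin n))) :
    (PrincipalSubmatrix A {i,j}).mulVec x ⟨a, ha⟩
      = A a i * x ⟨i, by simp⟩ + A a j * x ⟨j, by simp⟩ := by
  have huniv : (Finset.univ : Finset ({i,j} : Finset (Fin n)))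
      = {⟨i, by simp⟩, ⟨j, by simp⟩} := by
    ext k
    simp only [Finset.mem_univ, Finset.mem_insert, Finset.mem_singleton, true_iff]
    have := k.2
    simp only [Finset.mem_insert, Finset.mem_singleton] at this
    rcases this with h | h
    · left; exact Subtype.ext h
    · right; exact Subtype.ext h
  rw [mulVec, dotProduct, huniv, Finset.sum_pair (by simpa [Subtype.ext_iff] using hij)]
  rfl

lemma pair_ssm {n : ℕ} (A : Matrix (Fin n) (Fin n) ℝ) (i j : Fin n) (hij : i ≠ j)
    (hii : 0 < A i i) (hjj : 0 < A j j) (hij0 : 0 ≤ A i j) :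
    StrictlySemiMonotone (PrincipalSubmatrix A ({i,j} : Finset (Fin n))) := by
  intro x hx hx0
  set ii : ({i,j} : Finset (Fin n)) := ⟨i, by simp⟩
  set jj : ({i,j} : Finset (Fin n)) := ⟨j, by simp⟩
  by_cases hxi : 0 < x ii
  · refine ⟨ii, hxi, ?_⟩
    rw [pair_mulVec A i j hij x i (by simp)]
    have := hx0 jj
    nlinarith [mul_nonneg hij0 this]
  · have hxi0 : x ii = 0 := le_antisymm (not_lt.1 hxi) (hx0 ii)
    have hxj : 0 < x jj := by
      rcases lt_or_eq_of_le (hx0 jj) with h | h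
      · exact h
      · exfalso; apply hx; funext k
        have hk := k.2
        simp only [Finset.mem_insert, Finset.mem_singleton] at hk
        rcases hk with h' | h'
        · have : k = ii := Subtype.ext h'
          rw [this]; exact hxi0
        · have : k = jj := Subtype.ext h'
          rw [this]; exact h.symm
    refine ⟨jj, hxj, ?_⟩
    rw [pair_mulVec A i j hij x j (by simp)]
    rw [hxi0]
    nlinarith

lemma diag_pos {n : ℕ} (A : Matrix (Fin n) (Fin n) ℝ) (i : Fin n)
    (h : StrictlySemiMonotone (PrincipalSubmatrix A ({i} : Finset (Fin n)))) :
    0 < A i i := by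
  obtain ⟨k, hk, hmk⟩ := h (fun _ => 1) (by
    intro h'
    have := congrFun h' ⟨i, by simp⟩
    norm_num at this) (by intro k; norm_num)
  have hki : k = ⟨i, by simp⟩ := by
    have := k.2
    simp only [Finset.mem_singleton] at this
    exact Subtype.ext this
  subst hki
  have huniv : (Finset.univ : Finset ({i} : Finset (Fin n))) = {⟨i, by simp⟩} := by
    ext l
    simp only [Finset.mem_univ, Finset.mem_singleton, true_iff]
    have := l.2; simp only [Finset.mem_singleton] at this; exact Subtype.ext this
  rw [mulVec, dotProduct, huniv, Finset.sum_singleton] at hmk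
  simpa [PrincipalSubmatrix] using hmk

theorem stmt1 (A : Matrix (Fin 3) (Fin 3) ℝ) (hA : StrictlySemimonotoneExactOrder A 2) :
    (∀ i, 0 < A i i) ∧ (∀ i j, i ≠ j → A i j < 0) := by
  have hdiag : ∀ i, 0 < A i i := by
    intro i
    exact diag_pos A i (hA.1 {i} (by simp))
  refine ⟨hdiag, ?_⟩
  intro i j hij
  by_contra h
  push_neg at h
  have hcard : (3 : ℕ) - 2 < ({i,j} : Finset (Fin 3)).card := by
    rw [Finset.card_insert_of_notMem (by simpa using hij), Finset.card_singleton]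
    norm_num
  exact hA.2 {i,j} hcard (pair_ssm A i j hij (hdiag i) (hdiag j) h)
end

section
/- Let A be a 3×3 real matrix. If A is a semimonotone matrix of exact order 2 (an E0_2-matrix), then every principal minor of A of order 2 is strictly negative. -/
open Matrix

lemma aux_fin2 (B : Matrix (Fin 2) (Fin 2) ℝ) (hd0 : 0 ≤ B 0 0) (hd1 : 0 ≤ B 1 1)
    (hns : ¬ SemiMonotone B) : B.det < 0 := by
  rw [SemiMonotone] at hns
  push_neg at hns
  obtain ⟨x, hx0, hxnn, hx⟩ := hns
  have hmv : ∀ i, B.mulVec x i = B i 0 * x 0 + B i 1 * x 1 := by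
    intro i
    simp [Matrix.mulVec, dotProduct, Fin.sum_univ_two]
  have hx0' : 0 ≤ x 0 := hxnn 0
  have hx1' : 0 ≤ x 1 := hxnn 1
  have hx1pos : 0 < x 1 := by
    rcases lt_or_eq_of_le hx1' with h | h
    · exact h
    · exfalso
      have hx0pos : 0 < x 0 := by
        rcases lt_or_eq_of_le hx0' with h' | h'
        · exact h'
        · exact absurd (funext fun i => by fin_cases i <;> simp [← h, ← h'] : x = 0) hx0
      have := hx 0 hx0pos
      rw [hmv 0, ← h] at this
      nlinarith [mul_nonneg hd0 hx0']
  have hx0pos : 0 < x 0 := by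
    rcases lt_or_eq_of_le hx0' with h' | h'
    · exact h'
    · exfalso
      have := hx 1 hx1pos
      rw [hmv 1, ← h'] at this
      nlinarith [mul_nonneg hd1 hx1']
  have h1 := hx 0 hx0pos
  have h2 := hx 1 hx1pos
  rw [hmv 0] at h1
  rw [hmv 1] at h2
  rw [Matrix.det_fin_two]
  have key : (B 0 0 * x 0) * (B 1 1 * x 1) < (-(B 0 1 * x 1)) * (-(B 1 0 * x 0)) := by
    apply mul_lt_mul'' (by linarith) (by linarith)
    · exact mul_nonneg hd0 hx0'
    · exact mul_nonneg hd1 hx1'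
  nlinarith [mul_pos hx0pos hx1pos, key]

lemma aux_card2 {ι : Type*} [Fintype ι] [DecidableEq ι] (B : Matrix ι ι ℝ)
    (h2 : Fintype.card ι = 2) (hd : ∀ i, 0 ≤ B i i) (hns : ¬ SemiMonotone B) :
    B.det < 0 := by
  let e : ι ≃ Fin 2 := Fintype.equivFinOfCardEq h2
  have hdet : B.det = (B.submatrix e.symm e.symm).det :=
    (Matrix.det_submatrix_equiv_self e.symm B).symm
  rw [hdet]
  apply aux_fin2
  · exact hd _
  · exact hd _
  · intro hsm
    apply hns
    intro x hx0 hxnn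
    have hy0 : (x ∘ e.symm) ≠ 0 := by
      intro h
      apply hx0
      funext i
      have := congrFun h (e i)
      simpa using this
    have hynn : 0 ≤ (x ∘ e.symm) := fun i => hxnn _
    obtain ⟨i, hi1, hi2⟩ := hsm (x ∘ e.symm) hy0 hynn
    refine ⟨e.symm i, hi1, ?_⟩
    have : (B.submatrix e.symm e.symm).mulVec (x ∘ e.symm) i = B.mulVec x (e.symm i) := by
      simp only [Matrix.mulVec, dotProduct, Matrix.submatrix_apply, Function.comp]
      exact Fintype.sum_equiv e.symm _ _ (fun j => rfl)
    rwa [this] at hi2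

theorem stmt2 (A : Matrix (Fin 3) (Fin 3) ℝ) (hA : SemimonotoneExactOrder A 2) :
    ∀ s : Finset (Fin 3), s.card = 2 → (PrincipalSubmatrix A s).det < 0 := by
  intro s hs
  have hdiag : ∀ j : Fin 3, 0 ≤ A j j := by
    intro j
    have hcard : ({j} : Finset (Fin 3)).card = 3 - 2 := by simp
    have hsm := hA.1 {j} hcard
    obtain ⟨i, _, hi⟩ := hsm (fun _ => 1)
      (by
        intro h
        have := congrFun h ⟨j, Finset.mem_singleton_self j⟩
        simp at this)
      (fun _ => zero_le_one)
    have hij : (i : Fin 3) = j := Finset.mem_singleton.mp i.2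
    have huniv : (Finset.univ : Finset {x // x ∈ ({j} : Finset (Fin 3))}) =
        {⟨j, Finset.mem_singleton_self j⟩} := by
      ext a
      simp [Subtype.ext_iff, Finset.mem_singleton.mp a.2]
    rw [Matrix.mulVec, dotProduct, huniv] at hi
    simpa [PrincipalSubmatrix, hij] using hi
  have hcard2 : Fintype.card {x // x ∈ s} = 2 := by
    rw [Fintype.card_coe, hs]
  apply aux_card2 _ hcard2
  · intro i
    exact hdiag i
  · apply hA.2
    omega
end

section
/- Let A be a 3×3 real matrix. If A is a strictly semimonotone matrix of exact order 2 (an E_2-matrix), then every principal minor of A of order 2 is nonpositive. -/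
open Matrix

/-- Strict semimonotonicity is preserved under simultaneous reindexing. -/
lemma ssm_submatrix {ι κ : Type*} [Fintype ι] [Fintype κ] [DecidableEq ι] [DecidableEq κ]
    (M : Matrix ι ι ℝ) (e : κ ≃ ι) (hM : StrictlySemiMonotone M) :
    StrictlySemiMonotone (M.submatrix e e) := by
  intro x hx hx0
  set y : ι → ℝ := fun i => x (e.symm i) with hy
  have hy0 : 0 ≤ y := fun i => hx0 _
  have hyne : y ≠ 0 := by
    intro h
    apply hx
    funext k
    have := congrFun h (e k)
    simpa [hy] using this
  obtain ⟨i, hi1, hi2⟩ := hM y hyne hy0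
  refine ⟨e.symm i, by simpa [hy] using hi1, ?_⟩
  have : (M.submatrix e e).mulVec x (e.symm i) = M.mulVec y i := by
    simp only [Matrix.mulVec, dotProduct, Matrix.submatrix_apply, Equiv.apply_symm_apply]
    rw [← Equiv.sum_comp e (fun l => M i l * y l)]
    simp [hy]
  rw [this]
  exact hi2

lemma two_by_two (a b c d : ℝ) (ha : 0 < a) (hd : 0 < d)
    (h : ¬ StrictlySemiMonotone !![a, b; c, d]) : a * d - b * c ≤ 0 := by
  rw [StrictlySemiMonotone] at h
  push_neg at h
  obtain ⟨x, hx, hx0, hns⟩ := h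
  have m0 : (!![a, b; c, d]).mulVec x 0 = a * x 0 + b * x 1 := by
    simp [Matrix.mulVec, dotProduct, Fin.sum_univ_two]
  have m1 : (!![a, b; c, d]).mulVec x 1 = c * x 0 + d * x 1 := by
    simp [Matrix.mulVec, dotProduct, Fin.sum_univ_two]
  have hpos : 0 < x 0 ∧ 0 < x 1 := by
    have h0 : (0:ℝ) ≤ x 0 := hx0 0
    have h1 : (0:ℝ) ≤ x 1 := hx0 1
    rcases eq_or_lt_of_le h0 with h0' | h0'
    · rcases eq_or_lt_of_le h1 with h1' | h1'
      · exfalso; apply hx; funext t; fin_cases t <;> simp [← h0', ← h1']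
      · exfalso
        have := hns 1 h1'
        rw [m1, ← h0'] at this
        nlinarith
    · rcases eq_or_lt_of_le h1 with h1' | h1'
      · exfalso
        have := hns 0 h0'
        rw [m0, ← h1'] at this
        nlinarith
      · exact ⟨h0', h1'⟩
  obtain ⟨hu, hv⟩ := hpos
  have e0 := hns 0 hu
  have e1 := hns 1 hv
  rw [m0] at e0
  rw [m1] at e1
  have key : (a * x 0) * (d * x 1) ≤ (-(b * x 1)) * (-(c * x 0)) := by
    apply mul_le_mul (by linarith) (by linarith) (by positivity) (by nlinarith)
  nlinarith [mul_pos hu hv]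

lemma diag_pos_s3 (A : Matrix (Fin 3) (Fin 3) ℝ) (hA : StrictlySemimonotoneExactOrder A 2)
    (i : Fin 3) : 0 < A i i := by
  have h1 : ({i} : Finset (Fin 3)).card = 3 - 2 := by simp
  have := hA.1 {i} h1
  have hmem : i ∈ ({i} : Finset (Fin 3)) := Finset.mem_singleton_self i
  obtain ⟨k, hk1, hk2⟩ := this (fun _ => 1) (by
      intro h
      have := congrFun h ⟨i, hmem⟩
      norm_num at this) (fun _ => zero_le_one)
  have hk : (k : Fin 3) = i := Finset.mem_singleton.mp k.2
  have : (PrincipalSubmatrix A {i}).mulVec (fun _ => 1) k = A i i := by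
    simp only [Matrix.mulVec, dotProduct, mul_one]
    rw [Finset.sum_congr rfl (fun l _ => by
      rw [show (PrincipalSubmatrix A {i}) k l = A i i by
        simp [PrincipalSubmatrix, hk, Finset.mem_singleton.mp l.2]])]
    simp [Finset.card_univ]
  rwa [this] at hk2

theorem stmt3 (A : Matrix (Fin 3) (Fin 3) ℝ) (hA : StrictlySemimonotoneExactOrder A 2) :
    ∀ s : Finset (Fin 3), s.card = 2 → (PrincipalSubmatrix A s).det ≤ 0 := by
  intro s hs
  obtain ⟨i, j, hij, rfl⟩ := Finset.card_eq_two.mp hs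
  have hi : i ∈ ({i, j} : Finset (Fin 3)) := by simp
  have hj : j ∈ ({i, j} : Finset (Fin 3)) := by simp
  -- build the equivalence Fin 2 ≃ ↥{i,j}
  have hcard : Fintype.card (({i, j} : Finset (Fin 3)) : Type) = 2 := by
    rw [Fintype.card_coe]; exact hs
  let f : Fin 2 → (({i, j} : Finset (Fin 3)) : Type) := ![⟨i, hi⟩, ⟨j, hj⟩]
  have hinj : Function.Injective f := by
    intro t1 t2 h
    fin_cases t1 <;> fin_cases t2 <;> simp_all [f, Subtype.ext_iff]
  have hbij : Function.Bijective f :=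
    (Fintype.bijective_iff_injective_and_card f).mpr ⟨hinj, by rw [Fintype.card_fin, hcard]⟩
  let e : Fin 2 ≃ (({i, j} : Finset (Fin 3)) : Type) := Equiv.ofBijective f hbij
  -- the reindexed matrix
  have hB : (PrincipalSubmatrix A {i, j}).submatrix e e =
      !![A i i, A i j; A j i, A j j] := by
    ext t1 t2
    fin_cases t1 <;> fin_cases t2 <;>
      simp [e, f, PrincipalSubmatrix, Equiv.ofBijective, Matrix.submatrix_apply]
  have hdet : (PrincipalSubmatrix A {i, j}).det =
      (!![A i i, A i j; A j i, A j j]).det := by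
    rw [← hB, Matrix.det_submatrix_equiv_self]
  rw [hdet, Matrix.det_fin_two_of]
  have hnot : ¬ StrictlySemiMonotone (PrincipalSubmatrix A {i, j}) :=
    hA.2 {i, j} (by rw [hs]; norm_num)
  have hP : PrincipalSubmatrix A {i, j} =
      (!![A i i, A i j; A j i, A j j]).submatrix e.symm e.symm := by
    ext a b
    rw [← hB]
    simp
  have hnot2 : ¬ StrictlySemiMonotone (!![A i i, A i j; A j i, A j j]) := by
    intro hssm
    exact hnot (hP ▸ ssm_submatrix _ e.symm hssm)
  exact two_by_two _ _ _ _ (diag_pos_s3 A hA i) (diag_pos_s3 A hA j) hnot2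
end

section
/- Let A be a 3×3 real matrix. If A is a semimonotone matrix of exact order 2 (an E0_2-matrix), then A is neither upper triangular nor lower triangular. -/
open Matrix

lemma upper_semi {ι : Type*} [Fintype ι] [LinearOrder ι] (B : Matrix ι ι ℝ)
    (hd : ∀ i, 0 ≤ B i i) (ht : ∀ i j, j < i → B i j = 0) : SemiMonotone B := by
  intro x hx hx0
  have hne : (Finset.univ.filter fun j => 0 < x j).Nonempty := by
    by_contra h
    apply hx
    funext j
    have hemp := Finset.not_nonempty_iff_eq_empty.mp h
    have hj : ¬ 0 < x j := by
      intro hj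
      have : j ∈ Finset.univ.filter fun j => 0 < x j := by simp [hj]
      simp [hemp] at this
    exact le_antisymm (not_lt.mp hj) (hx0 j)
  set S := Finset.univ.filter fun j => 0 < x j with hS
  set i := S.max' hne with hi
  have hiS : i ∈ S := S.max'_mem hne
  have hxi : 0 < x i := by
    have := Finset.mem_filter.mp hiS
    exact this.2
  refine ⟨i, hxi, ?_⟩
  show 0 ≤ ∑ j, B i j * x j
  apply Finset.sum_nonneg
  intro j _
  rcases lt_trichotomy j i with h | h | h
  · rw [ht i j h]; simp
  · rw [h]; exact mul_nonneg (hd i) (hx0 i)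
  · have hxj : x j = 0 := by
      by_contra hxj
      have hpos : 0 < x j := lt_of_le_of_ne (hx0 j) (Ne.symm hxj)
      have : j ∈ S := by simp [hS, hpos]
      exact absurd (S.le_max' j this) (not_le.mpr h)
    simp [hxj]

lemma lower_semi {ι : Type*} [Fintype ι] [LinearOrder ι] (B : Matrix ι ι ℝ)
    (hd : ∀ i, 0 ≤ B i i) (ht : ∀ i j, i < j → B i j = 0) : SemiMonotone B := by
  intro x hx hx0
  have hne : (Finset.univ.filter fun j => 0 < x j).Nonempty := by
    by_contra h
    apply hx
    funext j
    have hemp := Finset.not_nonempty_iff_eq_empty.mp h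
    have hj : ¬ 0 < x j := by
      intro hj
      have : j ∈ Finset.univ.filter fun j => 0 < x j := by simp [hj]
      simp [hemp] at this
    exact le_antisymm (not_lt.mp hj) (hx0 j)
  set S := Finset.univ.filter fun j => 0 < x j with hS
  set i := S.min' hne with hi
  have hiS : i ∈ S := S.min'_mem hne
  have hxi : 0 < x i := by
    have := Finset.mem_filter.mp hiS
    exact this.2
  refine ⟨i, hxi, ?_⟩
  show 0 ≤ ∑ j, B i j * x j
  apply Finset.sum_nonneg
  intro j _
  rcases lt_trichotomy i j with h | h | h
  · rw [ht i j h]; simp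
  · subst h; exact mul_nonneg (hd i) (hx0 i)
  · have hxj : x j = 0 := by
      by_contra hxj
      have hpos : 0 < x j := lt_of_le_of_ne (hx0 j) (Ne.symm hxj)
      have : j ∈ S := by simp [hS, hpos]
      exact absurd (S.min'_le j this) (not_le.mpr h)
    simp [hxj]

theorem stmt4 (A : Matrix (Fin 3) (Fin 3) ℝ) (hA : SemimonotoneExactOrder A 2) :
    (¬ ∀ i j : Fin 3, j < i → A i j = 0) ∧ (¬ ∀ i j : Fin 3, i < j → A i j = 0) := by
  have hdiag : ∀ i : Fin 3, 0 ≤ A i i := by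
    intro i
    have hs := hA.1 {i} (by simp)
    have hmem : i ∈ ({i} : Finset (Fin 3)) := Finset.mem_singleton_self i
    obtain ⟨j, _, h2⟩ := hs (fun _ => 1)
      (by
        intro h
        have := congrFun h ⟨i, hmem⟩
        simp at this)
      (fun _ => zero_le_one)
    have hji : (j : Fin 3) = i := Finset.mem_singleton.mp j.2
    have hval : (PrincipalSubmatrix A {i}).mulVec (fun _ => 1) j = A i i := by
      haveI : Subsingleton (({i} : Finset (Fin 3)) : Type) := by
        constructor
        intro a b
        apply Subtype.ext
        have ha := a.2; have hb := b.2
        simp only [Finset.mem_singleton] at ha hb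
        rw [ha, hb]
      show ∑ k, PrincipalSubmatrix A {i} j k * 1 = A i i
      rw [Fintype.sum_subsingleton _ (⟨i, hmem⟩ : ({i} : Finset (Fin 3)))]
      simp [PrincipalSubmatrix, hji]
    rw [hval] at h2
    exact h2
  have hcard : (3 : ℕ) - 2 < ({0, 1} : Finset (Fin 3)).card := by decide
  have hnot := hA.2 {0, 1} hcard
  constructor
  · intro hU
    apply hnot
    apply upper_semi
    · intro p
      exact hdiag p
    · intro p q hpq
      exact hU p q hpq
  · intro hL
    apply hnot
    apply lower_semi
    · intro p
      exact hdiag p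
    · intro p q hpq
      exact hL p q hpq
end

section
/- Let A be a 3×3 real matrix. If A is a semimonotone matrix of exact order 2 (an E0_2-matrix), then A is a Q_0-matrix; that is, for every q ∈ ℝ^3, if there exists z ≥ 0 with q + Az ≥ 0, then there exists z ≥ 0 with q + Az ≥ 0 and zᵀ(q + Az) = 0. -/
open Matrix

/-!
Since every `1 × 1` principal submatrix is semimonotone, the diagonal of `A` is nonnegative. A
`2 × 2` principal submatrix with nonnegative diagonal and a nonnegative off-diagonal entry is
semimonotone, so none of them being semimonotone makes `A` a Z-matrix. For a Z-matrix, a point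
minimising `∑ zᵢ` over the compact set `{0 ≤ z ≤ z₀, 0 ≤ q + A z}` solves the complementarity
problem: if `zᵢ > 0` and `(q + A z)ᵢ > 0`, decreasing `zᵢ` slightly keeps the point feasible,
because it can only increase the other coordinates of `q + A z`.
-/

def IsZMatrix {ι : Type*} (A : Matrix ι ι ℝ) : Prop :=
  Pairwise fun i j => A i j ≤ 0

section PrincipalSubmatrix

variable {n : ℕ} (A : Matrix (Fin n) (Fin n) ℝ)

theorem diag_nonneg_of_semiMonotone_principalSubmatrix_singleton {i : Fin n}
    (h : SemiMonotone (PrincipalSubmatrix A {i})) : 0 ≤ A i i := by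
  obtain ⟨p, -, hp⟩ := h (fun _ => 1) (Function.ne_iff.2 ⟨default, one_ne_zero⟩)
    (fun _ => zero_le_one)
  obtain rfl : p = ⟨i, Finset.mem_singleton_self i⟩ := Subsingleton.elim _ _
  simpa [mulVec, dotProduct, PrincipalSubmatrix] using hp

theorem semiMonotone_principalSubmatrix_pair {i j : Fin n} (hij : i ≠ j)
    (hii : 0 ≤ A i i) (hjj : 0 ≤ A j j) (hA : 0 ≤ A i j) :
    SemiMonotone (PrincipalSubmatrix A {i, j}) := by
  intro x hx0 hx
  set a : ({i, j} : Finset (Fin n)) := ⟨i, by simp⟩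
  set b : ({i, j} : Finset (Fin n)) := ⟨j, by simp⟩
  have hab : a ≠ b := fun h => hij (congrArg Subtype.val h)
  have hcover : ∀ p, p = a ∨ p = b := by
    rintro ⟨k, hk⟩
    rcases Finset.mem_insert.1 hk with rfl | hk
    · exact Or.inl rfl
    · exact Or.inr (Subtype.ext (Finset.mem_singleton.1 hk))
  have hmulVec : ∀ p, (PrincipalSubmatrix A {i, j} *ᵥ x) p = A p i * x a + A p j * x b := by
    intro p
    refine Fintype.sum_eq_add a b hab fun p' hp' => ?_
    exact absurd (hcover p') (not_or.2 hp')
  rcases (hx a).lt_or_eq with ha | ha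
  · exact ⟨a, ha, by rw [hmulVec]; exact add_nonneg (mul_nonneg hii ha.le) (mul_nonneg hA (hx b))⟩
  · have hb : 0 < x b := by
      refine (hx b).lt_of_ne fun hb => hx0 (funext fun p => ?_)
      rcases hcover p with rfl | rfl
      exacts [ha.symm, hb.symm]
    exact ⟨b, hb, by rw [hmulVec, ← ha]; simpa using mul_nonneg hjj hb.le⟩

end PrincipalSubmatrix

namespace IsZMatrix

variable {ι : Type*} [Fintype ι] [DecidableEq ι] {A : Matrix ι ι ℝ}

theorem exists_feasible_sub_single (hA : IsZMatrix A) {q z : ι → ℝ} {i : ι}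
    (hz : 0 ≤ z) (hw : 0 ≤ q + A *ᵥ z) (hzi : 0 < z i) (hwi : 0 < (q + A *ᵥ z) i) :
    ∃ ε > 0, 0 ≤ z - Pi.single i ε ∧ 0 ≤ q + A *ᵥ (z - Pi.single i ε) := by
  have hsmall : ∀ᶠ ε in nhdsWithin (0 : ℝ) (Set.Ioi 0),
      0 < ε ∧ ε < z i ∧ ε * A i i < (q + A *ᵥ z) i := by
    have h0 : Filter.Tendsto (fun ε : ℝ => ε * A i i) (nhds 0) (nhds 0) := by
      simpa using (continuous_mul_const (A i i)).tendsto 0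
    exact eventually_mem_nhdsWithin.and (nhdsWithin_le_nhds
      ((eventually_lt_nhds hzi).and (h0.eventually (eventually_lt_nhds hwi))))
  obtain ⟨ε, hε, hεz, hεw⟩ := hsmall.exists
  refine ⟨ε, hε, fun k => ?_, fun k => ?_⟩
  · rcases eq_or_ne k i with rfl | hk
    · simpa using hεz.le
    · simpa [hk] using hz k
  · rcases eq_or_ne k i with rfl | hk
    · simpa [mulVec_sub, mulVec_single, add_sub_assoc'] using hεw.le
    · have : 0 ≤ -(ε * A k i) := neg_nonneg.2 (mul_nonpos_of_nonneg_of_nonpos hε.le (hA hk))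
      simpa [mulVec_sub, mulVec_single, add_sub_assoc'] using add_nonneg (hw k) this

theorem exists_lcp_solution (hA : IsZMatrix A) (q : ι → ℝ)
    (hfeas : ∃ z : ι → ℝ, 0 ≤ z ∧ 0 ≤ q + A *ᵥ z) :
    ∃ z : ι → ℝ, 0 ≤ z ∧ 0 ≤ q + A *ᵥ z ∧ z ⬝ᵥ (q + A *ᵥ z) = 0 := by
  obtain ⟨z₀, hz₀, hw₀⟩ := hfeas
  set T := Set.Icc 0 z₀ ∩ {z | 0 ≤ q + A *ᵥ z}
  have hT : IsCompact T := isCompact_Icc.inter_right <| isClosed_le continuous_const <|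
    continuous_const.add (continuous_const.matrix_mulVec continuous_id)
  obtain ⟨z, ⟨⟨hz, hzz₀⟩, hw⟩, hmin⟩ := hT.exists_isMinOn ⟨z₀, ⟨hz₀, le_rfl⟩, hw₀⟩
    (continuous_finsetSum Finset.univ fun k _ => continuous_apply k).continuousOn
  refine ⟨z, hz, hw, Finset.sum_eq_zero fun i _ => ?_⟩
  by_contra hne
  obtain ⟨ε, hε, hz', hw'⟩ := hA.exists_feasible_sub_single hz hw
    ((hz i).lt_of_ne fun h => hne (by simp [← h]))
    ((hw i).lt_of_ne fun h => hne (by simp [← h]))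
  have hle : z - Pi.single i ε ≤ z := sub_le_self z (Pi.single_nonneg.2 hε.le)
  have hsum : ∑ k, (z - Pi.single i ε : ι → ℝ) k = ∑ k, z k - ε := by
    simp [Finset.sum_sub_distrib]
  have hminle := isMinOn_iff.1 hmin _ ⟨⟨hz', hle.trans hzz₀⟩, hw'⟩
  simp only [hsum] at hminle
  linarith

end IsZMatrix

theorem IsZMatrix.of_semimonotoneExactOrder {n k : ℕ} {A : Matrix (Fin n) (Fin n) ℝ}
    (hA : SemimonotoneExactOrder A k) (hk : n - k = 1) : IsZMatrix A := by
  have hdiag : ∀ i, 0 ≤ A i i := fun i =>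
    diag_nonneg_of_semiMonotone_principalSubmatrix_singleton A
      (hA.1 {i} (by rw [Finset.card_singleton, hk]))
  intro i j hij
  by_contra! hpos
  exact hA.2 {i, j} (by rw [Finset.card_pair hij, hk]; norm_num)
    (semiMonotone_principalSubmatrix_pair A hij (hdiag i) (hdiag j) hpos.le)

theorem stmt5 (A : Matrix (Fin 3) (Fin 3) ℝ) (hA : SemimonotoneExactOrder A 2) :
    ∀ q : Fin 3 → ℝ, (∃ z : Fin 3 → ℝ, 0 ≤ z ∧ 0 ≤ q + A.mulVec z) →
      ∃ z : Fin 3 → ℝ, 0 ≤ z ∧ 0 ≤ q + A.mulVec z ∧ z ⬝ᵥ (q + A.mulVec z) = 0 :=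
  (IsZMatrix.of_semimonotoneExactOrder hA rfl).exists_lcp_solution
end

section
/- Let A be a 3×3 real matrix. If A is a semimonotone matrix of exact order 2 (an E0_2-matrix), then det A < 0; in particular A is invertible. -/
open Matrix

/-!
The `1 × 1` principal submatrices are semimonotone, so the diagonal of `A` is nonnegative. No
`2 × 2` principal submatrix is semimonotone; a witness vector for this has both coordinates
positive, which forces both off-diagonal entries and the `2 × 2` principal minor to be negative.
With these signs every term of
`det A = a₀₀ m₁₂ - a₀₁ a₁₀ a₂₂ + a₀₁ a₁₂ a₂₀ + a₀₂ a₁₀ a₂₁ - a₀₂ a₁₁ a₂₀`,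
where `m₁₂` is the minor on `{1, 2}`, is nonpositive, and the middle two are negative.
-/

namespace SemiMonotone

variable {ι κ : Type*} [Fintype ι] [Fintype κ] {A : Matrix ι ι ℝ}

theorem diag_nonneg [DecidableEq ι] (hA : SemiMonotone A) (i : ι) : 0 ≤ A i i := by
  obtain ⟨j, hj, hAj⟩ := hA (Pi.single i 1) (by simp) (Pi.single_nonneg.mpr zero_le_one)
  obtain rfl : j = i := by by_contra h; simp [h] at hj
  simpa using hAj

/-- A test vector of `A.submatrix f f`, extended by zero, is a test vector of `A`. -/
theorem submatrix (hA : SemiMonotone A) {f : κ → ι} (hf : Function.Injective f) :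
    SemiMonotone (A.submatrix f f) := by
  intro y hy0 hy
  set x := Function.extend f y (0 : ι → ℝ)
  have hxf : ∀ k, x (f k) = y k := hf.extend_apply y _
  have hx_off : ∀ i ∉ Set.range f, x i = 0 := fun i hi => Function.extend_apply' y _ i hi
  have hx_ne : x ≠ 0 := fun h => hy0 (funext fun k => by simpa [hxf] using congrFun h (f k))
  have hx : 0 ≤ x := by
    intro i
    by_cases hi : i ∈ Set.range f
    · obtain ⟨k, rfl⟩ := hi
      simpa [hxf] using hy k
    · simp [hx_off i hi]
  obtain ⟨i, hxi, hAxi⟩ := hA x hx_ne hx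
  obtain ⟨k, rfl⟩ : i ∈ Set.range f := by
    by_contra hi
    simp [hx_off i hi] at hxi
  refine ⟨k, by simpa [hxf] using hxi, ?_⟩
  have hmul : (A.submatrix f f *ᵥ y) k = (A *ᵥ x) (f k) :=
    Fintype.sum_of_injective f hf _ _ (fun i hi => by simp [hx_off i hi]) (fun l => by simp [hxf])
  exact hmul ▸ hAxi

theorem principalSubmatrix_of_subset_range {n : ℕ} {A : Matrix (Fin n) (Fin n) ℝ}
    {v : κ → Fin n} (hA : SemiMonotone (A.submatrix v v)) {s : Finset (Fin n)}
    (hs : ↑s ⊆ Set.range v) : SemiMonotone (PrincipalSubmatrix A s) := by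
  let g : s → κ := fun k => (hs k.2).choose
  have hg : ∀ k, v (g k) = k := fun k => (hs k.2).choose_spec
  have hg_inj : Function.Injective g := fun k l h => Subtype.ext (by rw [← hg k, ← hg l, h])
  have : PrincipalSubmatrix A s = (A.submatrix v v).submatrix g g := by
    ext k l
    simp [PrincipalSubmatrix, hg]
  exact this ▸ hA.submatrix hg_inj

end SemiMonotone

/-- A witness `x` of non-semimonotonicity is positive in both coordinates; then the two
row inequalities `B i i * x i < -B i j * x j` multiply to `B 0 0 * B 1 1 < B 0 1 * B 1 0`. -/
theorem offDiag_neg_and_det_neg_of_not_semiMonotone_fin_two {B : Matrix (Fin 2) (Fin 2) ℝ}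
    (h0 : 0 ≤ B 0 0) (h1 : 0 ≤ B 1 1) (hB : ¬SemiMonotone B) :
    B 0 1 < 0 ∧ B 1 0 < 0 ∧ B.det < 0 := by
  simp only [SemiMonotone, not_forall, not_exists, not_and, not_le] at hB
  obtain ⟨x, hx_ne, hx_nn, hBx⟩ := hB
  have row0 : 0 < x 0 → B 0 0 * x 0 + B 0 1 * x 1 < 0 := by
    simpa [mulVec, dotProduct, Fin.sum_univ_two] using hBx 0
  have row1 : 0 < x 1 → B 1 0 * x 0 + B 1 1 * x 1 < 0 := by
    simpa [mulVec, dotProduct, Fin.sum_univ_two] using hBx 1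
  have col0 : 0 < x 0 → B 0 1 < 0 ∧ 0 < x 1 := fun h => by
    have hneg : B 0 1 * x 1 < 0 := by nlinarith [row0 h, mul_nonneg h0 (hx_nn 0)]
    have hB01 := neg_of_mul_neg_left hneg (hx_nn 1)
    exact ⟨hB01, pos_of_mul_neg_right hneg hB01.le⟩
  have col1 : 0 < x 1 → B 1 0 < 0 ∧ 0 < x 0 := fun h => by
    have hneg : B 1 0 * x 0 < 0 := by nlinarith [row1 h, mul_nonneg h1 (hx_nn 1)]
    have hB10 := neg_of_mul_neg_left hneg (hx_nn 0)
    exact ⟨hB10, pos_of_mul_neg_right hneg hB10.le⟩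
  obtain ⟨hx0, hx1⟩ : 0 < x 0 ∧ 0 < x 1 := by
    have : 0 < x 0 ∨ 0 < x 1 := by
      by_contra! h
      exact hx_ne (funext fun i => by
        fin_cases i
        exacts [le_antisymm h.1 (hx_nn 0), le_antisymm h.2 (hx_nn 1)])
    rcases this with h | h
    · exact ⟨h, (col0 h).2⟩
    · exact ⟨(col1 h).2, h⟩
  refine ⟨(col0 hx0).1, (col1 hx1).1, ?_⟩
  have hprod : B 0 0 * x 0 * (B 1 1 * x 1) < -(B 0 1 * x 1) * -(B 1 0 * x 0) :=
    mul_lt_mul'' (by linarith [row0 hx0]) (by linarith [row1 hx1])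
      (mul_nonneg h0 hx0.le) (mul_nonneg h1 hx1.le)
  rw [det_fin_two]
  nlinarith [mul_pos hx0 hx1]

theorem stmt6 (A : Matrix (Fin 3) (Fin 3) ℝ) (hA : SemimonotoneExactOrder A 2) :
    A.det < 0 := by
  obtain ⟨hsub, hnot⟩ := hA
  have hdiag : ∀ i, 0 ≤ A i i := fun i =>
    (hsub {i} (Finset.card_singleton i)).diag_nonneg ⟨i, Finset.mem_singleton_self i⟩
  have hpair : ∀ i j : Fin 3, i ≠ j →
      A i j < 0 ∧ A j i < 0 ∧ A i i * A j j - A i j * A j i < 0 := fun i j hij => by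
    have hB : ¬SemiMonotone (A.submatrix ![i, j] ![i, j]) := fun h =>
      hnot {i, j} (by simp [Finset.card_pair hij])
        (h.principalSubmatrix_of_subset_range (by simp [Set.insert_subset_iff]))
    have h := offDiag_neg_and_det_neg_of_not_semiMonotone_fin_two (hdiag i) (hdiag j) hB
    rw [det_fin_two] at h
    simpa using h
  obtain ⟨b01, b10, -⟩ := hpair 0 1 (by decide)
  obtain ⟨b02, b20, -⟩ := hpair 0 2 (by decide)
  obtain ⟨b12, b21, m12⟩ := hpair 1 2 (by decide)
  rw [det_fin_three]
  nlinarith [mul_nonpos_of_nonneg_of_nonpos (hdiag 0) m12.le,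
    mul_nonneg (mul_pos_of_neg_of_neg b01 b10).le (hdiag 2),
    mul_neg_of_pos_of_neg (mul_pos_of_neg_of_neg b01 b12) b20,
    mul_neg_of_pos_of_neg (mul_pos_of_neg_of_neg b02 b10) b21,
    mul_nonneg (mul_pos_of_neg_of_neg b02 b20).le (hdiag 1)]
end

section
/- Let n ≥ 3 and let A be an n×n real matrix. If A is a semimonotone matrix of exact order 2 (an E0_2-matrix), then every row of A and every column of A contains at least two strictly negative entries. -/
open Matrix

lemma mulVec_principal {n : ℕ} (A : Matrix (Fin n) (Fin n) ℝ) (s : Finset (Fin n))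
    (x : Fin n → ℝ) (hx : ∀ j, j ∉ s → x j = 0) (i : s) :
    (PrincipalSubmatrix A s).mulVec (fun j : s => x j) i = A.mulVec x i := by
  simp only [Matrix.mulVec, dotProduct, PrincipalSubmatrix, Matrix.submatrix_apply]
  rw [Finset.sum_coe_sort s (fun j => A i j * x j)]
  exact Finset.sum_subset (Finset.subset_univ s)
    (fun j _ hj => by rw [hx j hj, mul_zero])

lemma sm_iff {n : ℕ} (A : Matrix (Fin n) (Fin n) ℝ) (s : Finset (Fin n)) :
    SemiMonotone (PrincipalSubmatrix A s) ↔
      ∀ x : Fin n → ℝ, x ≠ 0 → 0 ≤ x → (∀ j, j ∉ s → x j = 0) →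
        ∃ i ∈ s, 0 < x i ∧ 0 ≤ A.mulVec x i := by
  constructor
  · intro h x hx0 hxnn hsupp
    have hne : (fun j : s => x j) ≠ 0 := by
      intro hc
      apply hx0; funext l
      by_cases hl : l ∈ s
      · exact congrFun hc ⟨l, hl⟩
      · exact hsupp l hl
    obtain ⟨i, hi, hAi⟩ := h (fun j : s => x j) hne (fun j => hxnn j)
    exact ⟨i, i.2, hi, by rwa [mulVec_principal A s x hsupp i] at hAi⟩
  · intro h y hy0 hynn
    set x : Fin n → ℝ := fun j => if h : j ∈ s then y ⟨j, h⟩ else 0 with hxdef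
    have hsupp : ∀ j, j ∉ s → x j = 0 := fun j hj => dif_neg hj
    have hxy : (fun j : s => x j) = y := funext fun j => dif_pos j.2
    have hne : x ≠ 0 := by
      intro hc
      apply hy0; rw [← hxy, hc]; rfl
    have hnn : 0 ≤ x := by
      intro j
      by_cases hj : j ∈ s
      · simpa [hxdef, dif_pos hj] using hynn ⟨j, hj⟩
      · simp [hxdef, dif_neg hj]
    obtain ⟨i, hi, hxi, hAi⟩ := h x hne hnn hsupp
    refine ⟨⟨i, hi⟩, ?_, ?_⟩
    · have : x i = y ⟨i, hi⟩ := congrFun hxy ⟨i, hi⟩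
      rwa [← this]
    · have := mulVec_principal A s x hsupp ⟨i, hi⟩
      rw [hxy] at this
      rwa [this]
  
lemma not_sm {n : ℕ} {A : Matrix (Fin n) (Fin n) ℝ} {s : Finset (Fin n)}
    (h : ¬ SemiMonotone (PrincipalSubmatrix A s)) :
    ∃ x : Fin n → ℝ, x ≠ 0 ∧ 0 ≤ x ∧ (∀ j, j ∉ s → x j = 0) ∧
      ∀ i ∈ s, 0 < x i → A.mulVec x i < 0 := by
  rw [sm_iff] at h
  push_neg at h
  obtain ⟨x, h1, h2, h3, h4⟩ := h
  exact ⟨x, h1, h2, h3, h4⟩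

lemma diag_nonneg {n : ℕ} (hn : 3 ≤ n) {A : Matrix (Fin n) (Fin n) ℝ}
    (hA : SemimonotoneExactOrder A 2) (j : Fin n) : 0 ≤ A j j := by
  obtain ⟨t, hjt, hcard⟩ := Finset.exists_superset_card_eq
    (s := {j}) (n := n - 2) (by rw [Finset.card_singleton]; omega)
    (by rw [Fintype.card_fin]; omega)
  have hsm := (sm_iff A t).mp (hA.1 t hcard)
  obtain ⟨i, hi, hxi, hAi⟩ := hsm (Pi.single j 1)
    (by
      intro hc
      have := congrFun hc j
      simp at this) (by
      intro l
      by_cases hl : l = j <;> simp [Pi.single_apply, hl])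
    (by
      intro l hl
      have : l ≠ j := fun h => hl (h ▸ hjt (Finset.mem_singleton_self j))
      simp [Pi.single_apply, this])
  have hij : i = j := by
    by_contra hne
    simp [Pi.single_apply, hne] at hxi
  subst hij
  simpa using hAi

theorem stmt9 (n : ℕ) (hn : 3 ≤ n) (A : Matrix (Fin n) (Fin n) ℝ)
    (hA : SemimonotoneExactOrder A 2) :
    (∀ i, 2 ≤ (Finset.univ.filter (fun j => A i j < 0)).card) ∧
    (∀ j, 2 ≤ (Finset.univ.filter (fun i => A i j < 0)).card) := by
  haveI : Nontrivial (Fin n) := Fin.nontrivial_iff_two_le.mpr (by omega)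
  constructor
  · -- rows
    intro i
    by_contra hlt
    push_neg at hlt
    have hone : ((Finset.univ.filter (fun j => A i j < 0)).card ≤ 1) := by omega
    -- find j ≠ i with all other entries of row i nonneg
    obtain ⟨j, hji, hrow⟩ : ∃ j, j ≠ i ∧ ∀ l, l ≠ j → 0 ≤ A i l := by
      rcases Finset.card_le_one.mp hone with h1
      rcases Finset.eq_empty_or_nonempty (Finset.univ.filter (fun j => A i j < 0)) with he | ⟨j0, hj0⟩
      · obtain ⟨j, hj⟩ := exists_ne i
        refine ⟨j, hj, fun l _ => ?_⟩
        by_contra hneg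
        push_neg at hneg
        have : l ∈ Finset.univ.filter (fun j => A i j < 0) := by simp [hneg]
        simp [he] at this
      · have hj0i : j0 ≠ i := by
          intro h
          have h2 := (Finset.mem_filter.mp hj0).2
          rw [h] at h2
          exact absurd h2 (not_lt.mpr (diag_nonneg hn hA i))
        refine ⟨j0, hj0i, fun l hl => ?_⟩
        by_contra hneg
        push_neg at hneg
        have hmem : l ∈ Finset.univ.filter (fun j => A i j < 0) := by simp [hneg]
        exact hl (h1 l hmem j0 hj0)
    -- s = univ \ {j}, not semimonotone
    set s := Finset.univ.erase j with hs
    have hscard : s.card = n - 1 := by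
      rw [hs, Finset.card_erase_of_mem (Finset.mem_univ j), Finset.card_univ, Fintype.card_fin]
    have hns : ¬ SemiMonotone (PrincipalSubmatrix A s) := hA.2 s (by omega)
    obtain ⟨x, hx0, hxnn, hsupp, hviol⟩ := not_sm hns
    have hxj : x j = 0 := hsupp j (by simp [hs])
    have hxi : x i = 0 := by
      by_contra hxine
      have hxipos : 0 < x i := lt_of_le_of_ne (hxnn i) (Ne.symm hxine)
      have his : i ∈ s := by simp [hs, Ne.symm hji]
      have := hviol i his hxipos
      have hge : 0 ≤ A.mulVec x i := by
        simp only [Matrix.mulVec, dotProduct]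
        apply Finset.sum_nonneg
        intro l _
        by_cases hl : l = j
        · simp [hl, hxj]
        · exact mul_nonneg (hrow l hl) (hxnn l)
      linarith
    set t := s.erase i with ht
    have htcard : t.card = n - 2 := by
      rw [ht, Finset.card_erase_of_mem (by simp [hs, Ne.symm hji]), hscard]; omega
    have hsm := (sm_iff A t).mp (hA.1 t htcard)
    obtain ⟨k, hk, hxk, hAk⟩ := hsm x hx0 hxnn (by
      intro l hl
      by_cases hli : l = i
      · rw [hli]; exact hxi
      · exact hsupp l (fun hls => hl (by simp [ht, hli, hls]))
      )
    exact absurd hAk (not_le.mpr (hviol k (Finset.mem_of_mem_erase hk) hxk))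
  · -- columns
    intro j
    by_contra hlt
    push_neg at hlt
    have hone : ((Finset.univ.filter (fun i => A i j < 0)).card ≤ 1) := by omega
    obtain ⟨i, hij, hcol⟩ : ∃ i, i ≠ j ∧ ∀ k, k ≠ i → 0 ≤ A k j := by
      rcases Finset.card_le_one.mp hone with h1
      rcases Finset.eq_empty_or_nonempty (Finset.univ.filter (fun i => A i j < 0)) with he | ⟨i0, hi0⟩
      · obtain ⟨i, hi⟩ := exists_ne j
        refine ⟨i, hi, fun k _ => ?_⟩
        by_contra hneg
        push_neg at hneg
        have : k ∈ Finset.univ.filter (fun i => A i j < 0) := by simp [hneg]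
        simp [he] at this
      · have hi0j : i0 ≠ j := by
          intro h; subst h
          have := (Finset.mem_filter.mp hi0).2
          exact absurd this (not_lt.mpr (diag_nonneg hn hA i0))
        refine ⟨i0, hi0j, fun k hk => ?_⟩
        by_contra hneg
        push_neg at hneg
        have hmem : k ∈ Finset.univ.filter (fun i => A i j < 0) := by simp [hneg]
        exact hk (h1 k hmem i0 hi0)
    set s := Finset.univ.erase i with hs
    have hscard : s.card = n - 1 := by
      rw [hs, Finset.card_erase_of_mem (Finset.mem_univ i), Finset.card_univ, Fintype.card_fin]
    have hns : ¬ SemiMonotone (PrincipalSubmatrix A s) := hA.2 s (by omega)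
    obtain ⟨x, hx0, hxnn, hsupp, hviol⟩ := not_sm hns
    have hjs : j ∈ s := by simp [hs, Ne.symm hij]
    -- x = x' + Pi.single j (x j)
    set x' := Function.update x j 0 with hx'
    have hxdecomp : x = x' + Pi.single j (x j) := by
      funext l
      by_cases hl : l = j
      · subst hl; simp [hx', Function.update_self]
      · simp [hx', Function.update_of_ne hl, Pi.single_apply, hl]
    by_cases hx'0 : x' = 0
    · -- x = Pi.single j (x j) with x j > 0
      have hxeq : x = Pi.single j (x j) := by
        have h := hxdecomp
        rw [hx'0, zero_add] at h
        exact h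
      have hxjpos : 0 < x j := by
        rcases lt_or_eq_of_le (hxnn j) with h | h
        · exact h
        · exfalso; apply hx0; funext l
          by_cases hl : l = j
          · rw [hl]; exact h.symm
          · have hc := congrFun hx'0 l
            rwa [hx', Function.update_of_ne hl] at hc
      have := hviol j hjs hxjpos
      rw [hxeq] at this
      simp only [Matrix.mulVec_single] at this
      have : A j j * x j < 0 := this
      nlinarith [diag_nonneg hn hA j]
    · set t := s.erase j with ht
      have htcard : t.card = n - 2 := by
        rw [ht, Finset.card_erase_of_mem hjs, hscard]; omega
      have hsm := (sm_iff A t).mp (hA.1 t htcard)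
      have hx'nn : 0 ≤ x' := by
        intro l
        by_cases hl : l = j
        · subst hl; simp [hx', Function.update_self]
        · rw [hx', Function.update_of_ne hl]; exact hxnn l
      obtain ⟨k, hk, hx'k, hAk⟩ := hsm x' hx'0 hx'nn (by
        intro l hl
        by_cases hlj : l = j
        · subst hlj; simp [hx', Function.update_self]
        · rw [hx', Function.update_of_ne hlj]
          exact hsupp l (fun hls => hl (by simp [ht, hlj, hls])))
      have hkj : k ≠ j := Finset.ne_of_mem_erase hk
      have hks : k ∈ s := Finset.mem_of_mem_erase hk
      have hki : k ≠ i := Finset.ne_of_mem_erase hks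
      have hxk : 0 < x k := by rwa [hx', Function.update_of_ne hkj] at hx'k
      have := hviol k hks hxk
      have hge : 0 ≤ A.mulVec x k := by
        rw [hxdecomp, Matrix.mulVec_add]
        have h2 : 0 ≤ (A *ᵥ Pi.single j (x j)) k := by
          simp only [Matrix.mulVec_single]
          exact mul_nonneg (hcol k hki) (hxnn j)
        exact add_nonneg hAk h2
      linarith
end

section
/- Let n ≥ 3 and let A be an n×n real matrix. If A is a strictly semimonotone matrix of exact order 2 (an E_2-matrix), then all diagonal entries of A are strictly positive and every row of A and every column of A contains at least two strictly negative entries. -/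
open Matrix

def AuxP {n : ℕ} (A : Matrix (Fin n) (Fin n) ℝ) (s : Finset (Fin n)) : Prop :=
  ∀ x : Fin n → ℝ, 0 ≤ x → (∀ j ∉ s, x j = 0) → x ≠ 0 →
    ∃ i ∈ s, 0 < x i ∧ 0 < ∑ j, A i j * x j

lemma auxP_of_ssm {n : ℕ} {A : Matrix (Fin n) (Fin n) ℝ} {s : Finset (Fin n)}
    (h : StrictlySemiMonotone (PrincipalSubmatrix A s)) : AuxP A s := by
  intro x hx hsupp hxne
  have hy : (fun j : s => x j) ≠ 0 := by
    intro h0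
    apply hxne
    funext j
    by_cases hj : j ∈ s
    · exact congrFun h0 ⟨j, hj⟩
    · exact hsupp j hj
  obtain ⟨⟨i, hi⟩, h1, h2⟩ := h _ hy (fun j => hx j)
  refine ⟨i, hi, h1, ?_⟩
  have hsum : ∑ j, A i j * x j = ∑ j ∈ s, A i j * x j := by
    refine (Finset.sum_subset s.subset_univ ?_).symm
    intro j _ hj
    rw [hsupp j hj, mul_zero]
  rw [hsum, ← Finset.sum_coe_sort s (fun j => A i j * x j)]
  simpa [Matrix.mulVec, dotProduct, PrincipalSubmatrix, Matrix.submatrix] using h2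

lemma ssm_of_auxP {n : ℕ} {A : Matrix (Fin n) (Fin n) ℝ} {s : Finset (Fin n)}
    (h : AuxP A s) : StrictlySemiMonotone (PrincipalSubmatrix A s) := by
  intro y hy0 hy
  set x : Fin n → ℝ := fun j => if hj : j ∈ s then y ⟨j, hj⟩ else 0 with hxdef
  have hxnn : 0 ≤ x := by
    intro j
    by_cases hj : j ∈ s <;> simp only [hxdef, hj, dif_pos, dif_neg, not_false_iff, le_refl]
    · exact hy ⟨j, hj⟩
    · exact le_refl 0
  have hsupp : ∀ j ∉ s, x j = 0 := fun j hj => by simp [hxdef, hj]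
  have hxne : x ≠ 0 := by
    intro h0
    apply hy0
    funext j
    have := congrFun h0 (j : Fin n)
    simpa [hxdef, j.2] using this
  obtain ⟨i, hi, h1, h2⟩ := h x hxnn hsupp hxne
  refine ⟨⟨i, hi⟩, by simpa [hxdef, hi] using h1, ?_⟩
  have hsum : ∑ j, A i j * x j = ∑ j ∈ s, A i j * x j := by
    refine (Finset.sum_subset s.subset_univ ?_).symm
    intro j _ hj
    rw [hsupp j hj, mul_zero]
  rw [hsum, ← Finset.sum_coe_sort s (fun j => A i j * x j)] at h2
  have : ∀ j : s, A i j * x j = A i j * y j := by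
    intro j; simp [hxdef, j.2]
  simpa [Matrix.mulVec, dotProduct, PrincipalSubmatrix, Matrix.submatrix,
    Finset.sum_congr rfl (fun j _ => this j)] using h2

lemma auxP_diag {n : ℕ} {A : Matrix (Fin n) (Fin n) ℝ} {s : Finset (Fin n)}
    (h : AuxP A s) {i : Fin n} (hi : i ∈ s) : 0 < A i i := by
  obtain ⟨k, _, hk1, hk2⟩ := h (fun j => if j = i then 1 else 0)
    (fun j => by positivity) (fun j hj => if_neg (fun e : j = i => hj (e ▸ hi)))
    (by intro h0; simpa using congrFun h0 i)
  have hki : k = i := by by_contra hne; simp [hne] at hk1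
  subst hki
  simpa using hk2

lemma auxP_def {n : ℕ} (A : Matrix (Fin n) (Fin n) ℝ) (s : Finset (Fin n)) :
  AuxP A s ↔ ∀ x : Fin n → ℝ, 0 ≤ x → (∀ j ∉ s, x j = 0) → x ≠ 0 →
    ∃ i ∈ s, 0 < x i ∧ 0 < ∑ j, A i j * x j := Iff.rfl

theorem stmt10 (n : ℕ) (hn : 3 ≤ n) (A : Matrix (Fin n) (Fin n) ℝ)
    (hA : StrictlySemimonotoneExactOrder A 2) :
    (∀ i, 0 < A i i) ∧
    (∀ i, 2 ≤ (Finset.univ.filter (fun j => A i j < 0)).card) ∧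
    (∀ j, 2 ≤ (Finset.univ.filter (fun i => A i j < 0)).card) := by
  have hdiag : ∀ i, 0 < A i i := by
    intro i
    obtain ⟨s, hs1, -, hs3⟩ := Finset.exists_subsuperset_card_eq (n := n - 2)
      (Finset.subset_univ {i}) (by rw [Finset.card_singleton]; omega)
      (by rw [Finset.card_univ, Fintype.card_fin]; omega)
    exact auxP_diag (auxP_of_ssm (hA.1 s hs3)) (hs1 (Finset.mem_singleton_self i))
  haveI : Nontrivial (Fin n) := by
    refine ⟨⟨0, by omega⟩, ⟨1, by omega⟩, ?_⟩
    simp [Fin.ext_iff]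
  refine ⟨hdiag, ?_, ?_⟩
  · -- rows
    intro i
    by_contra hlt
    push_neg at hlt
    -- obtain j0 ≠ i with all other entries of row i nonneg
    obtain ⟨j0, hj0i, hj0⟩ : ∃ j0, j0 ≠ i ∧ ∀ j, j ≠ j0 → 0 ≤ A i j := by
      rcases Finset.eq_empty_or_nonempty (Finset.univ.filter (fun j => A i j < 0)) with he | ⟨j0, hj0⟩
      · obtain ⟨j0, hj0⟩ := exists_ne i
        refine ⟨j0, hj0, fun j _ => ?_⟩
        by_contra hneg
        have : j ∈ Finset.univ.filter (fun j => A i j < 0) := by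
          simp [not_le.mp hneg]
        simp [he] at this
      · simp only [Finset.mem_filter] at hj0
        refine ⟨j0, fun e => absurd (e ▸ hj0.2) (not_lt.mpr (hdiag i).le), fun j hj => ?_⟩
        by_contra hneg
        have hjmem : j ∈ Finset.univ.filter (fun j => A i j < 0) := by
          simp [not_le.mp hneg]
        have : 2 ≤ (Finset.univ.filter (fun j => A i j < 0)).card := by
          refine Finset.one_lt_card.mpr ⟨j, hjmem, j0, by simp [hj0.2], hj⟩
        omega
    set s : Finset (Fin n) := Finset.univ.erase j0 with hsdef
    have hscard : s.card = n - 1 := by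
      rw [hsdef, Finset.card_erase_of_mem (Finset.mem_univ _), Finset.card_univ,
        Fintype.card_fin]
    refine hA.2 s (by omega) (ssm_of_auxP ((auxP_def A s).mpr ?_))
    intro x hx hsupp hxne
    have his : i ∈ s := Finset.mem_erase.mpr ⟨Ne.symm hj0i, Finset.mem_univ _⟩
    by_cases hxi : 0 < x i
    · refine ⟨i, his, hxi, ?_⟩
      refine Finset.sum_pos' (fun j _ => ?_) ⟨i, Finset.mem_univ _, mul_pos (hdiag i) hxi⟩
      by_cases hjj0 : j = j0
      · have : x j = 0 := hsupp j (by simp [hsdef, hjj0])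
        simp [this]
      · exact mul_nonneg (hj0 j hjj0) (hx j)
    · have hxi0 : x i = 0 := le_antisymm (not_lt.mp hxi) (hx i)
      have hs'card : (s.erase i).card = n - 2 := by
        rw [Finset.card_erase_of_mem his, hscard]; omega
      have hP' := (auxP_def A (s.erase i)).mp (auxP_of_ssm (hA.1 _ hs'card))
      obtain ⟨k, hk, hk1, hk2⟩ := hP' x hx
        (fun j hj => by
          by_cases hji : j = i
          · rw [hji]; exact hxi0
          · exact hsupp j (fun hjs => hj (Finset.mem_erase.mpr ⟨hji, hjs⟩))) hxne
      exact ⟨k, Finset.mem_of_mem_erase hk, hk1, hk2⟩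
  · -- columns
    intro j
    by_contra hlt
    push_neg at hlt
    obtain ⟨i0, hi0j, hi0⟩ : ∃ i0, i0 ≠ j ∧ ∀ i, i ≠ i0 → 0 ≤ A i j := by
      rcases Finset.eq_empty_or_nonempty (Finset.univ.filter (fun i => A i j < 0)) with he | ⟨i0, hi0⟩
      · obtain ⟨i0, hi0⟩ := exists_ne j
        refine ⟨i0, hi0, fun i _ => ?_⟩
        by_contra hneg
        have : i ∈ Finset.univ.filter (fun i => A i j < 0) := by
          simp [not_le.mp hneg]
        simp [he] at this
      · simp only [Finset.mem_filter] at hi0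
        refine ⟨i0, fun e => absurd (e ▸ hi0.2) (not_lt.mpr (hdiag j).le), fun i hi => ?_⟩
        by_contra hneg
        have himem : i ∈ Finset.univ.filter (fun i => A i j < 0) := by
          simp [not_le.mp hneg]
        have : 2 ≤ (Finset.univ.filter (fun i => A i j < 0)).card :=
          Finset.one_lt_card.mpr ⟨i, himem, i0, by simp [hi0.2], hi⟩
        omega
    set s : Finset (Fin n) := Finset.univ.erase i0 with hsdef
    have hscard : s.card = n - 1 := by
      rw [hsdef, Finset.card_erase_of_mem (Finset.mem_univ _), Finset.card_univ,
        Fintype.card_fin]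
    have hjs : j ∈ s := Finset.mem_erase.mpr ⟨Ne.symm hi0j, Finset.mem_univ _⟩
    refine hA.2 s (by omega) (ssm_of_auxP ((auxP_def A s).mpr ?_))
    intro x hx hsupp hxne
    by_cases hex : ∃ k, k ≠ j ∧ 0 < x k
    · obtain ⟨k, hkj, hk⟩ := hex
      set x' : Fin n → ℝ := fun m => if m = j then 0 else x m with hx'def
      have hx'nn : 0 ≤ x' := fun m => by
        by_cases hm : m = j
        · simp [hx'def, hm]
        · simpa [hx'def, hm] using hx m
      have hx'supp : ∀ m ∉ s.erase j, x' m = 0 := by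
        intro m hm
        by_cases hmj : m = j
        · simp [hx'def, hmj]
        · have hms : m ∉ s := fun hms => hm (Finset.mem_erase.mpr ⟨hmj, hms⟩)
          simp [hx'def, hmj, hsupp m hms]
      have hx'ne : x' ≠ 0 := by
        intro h0
        have := congrFun h0 k
        simp [hx'def, hkj] at this
        exact absurd this (ne_of_gt hk)
      have hs'card : (s.erase j).card = n - 2 := by
        rw [Finset.card_erase_of_mem hjs, hscard]; omega
      obtain ⟨m, hm, hm1, hm2⟩ := (auxP_def A (s.erase j)).mp
        (auxP_of_ssm (hA.1 _ hs'card)) x' hx'nn hx'supp hx'ne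
      have hmj : m ≠ j := (Finset.mem_erase.mp hm).1
      have hms : m ∈ s := Finset.mem_of_mem_erase hm
      refine ⟨m, hms, by simpa [hx'def, hmj] using hm1, ?_⟩
      have hsplit : ∑ j', A m j' * x j' =
          (∑ j' ∈ Finset.univ.erase j, A m j' * x j') + A m j * x j := by
        rw [Finset.sum_erase_add _ _ (Finset.mem_univ j)]
      have hsplit' : ∑ j', A m j' * x' j' = ∑ j' ∈ Finset.univ.erase j, A m j' * x j' := by
        rw [← Finset.sum_erase_add _ (fun j' => A m j' * x' j') (Finset.mem_univ j)]
        have : A m j * x' j = 0 := by simp [hx'def]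
        rw [this, add_zero]
        refine Finset.sum_congr rfl fun j' hj' => ?_
        simp [hx'def, (Finset.mem_erase.mp hj').1]
      have hmi0 : m ≠ i0 := (Finset.mem_erase.mp hms).1
      have : 0 ≤ A m j * x j := mul_nonneg (hi0 m hmi0) (hx j)
      rw [hsplit]
      rw [hsplit'] at hm2
      linarith
    · push_neg at hex
      have hxj : 0 < x j := by
        rcases (hx j).lt_or_eq with h | h
        · exact h
        · exfalso
          apply hxne
          funext m
          by_cases hmj : m = j
          · rw [hmj, ← h]
          · exact le_antisymm (hex m hmj) (hx m)
      refine ⟨j, hjs, hxj, ?_⟩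
      have : ∑ j', A j j' * x j' = A j j * x j := by
        refine Finset.sum_eq_single j (fun j' _ hj' => ?_) (by simp)
        rw [le_antisymm (hex j' hj') (hx j'), mul_zero]
      rw [this]
      exact mul_pos (hdiag j) hxj
end

section
/- Let A be an n×n real Z-matrix that is a semimonotone matrix of exact order 2 (an E0_2-matrix). Then every principal minor of A of order at most n−2 is nonnegative. -/
open Matrix

open Matrix Polynomial Filter Topology

lemma semiMonotone_submatrix {ι κ : Type*} [Fintype ι] [Fintype κ] [DecidableEq ι]
    {A : Matrix ι ι ℝ} (hA : SemiMonotone A) {e : κ → ι} (he : Function.Injective e) :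
    SemiMonotone (A.submatrix e e) := by
  intro x hx hx0
  set x' : ι → ℝ := Function.extend e x 0 with hx'
  have hap : ∀ k, x' (e k) = x k := fun k => he.extend_apply x 0 k
  have hoff : ∀ i, (¬ ∃ k, e k = i) → x' i = 0 := by
    intro i h
    rw [hx', Function.extend_apply' _ _ _ h]; rfl
  have hxnn : 0 ≤ x' := by
    intro i
    by_cases h : ∃ k, e k = i
    · obtain ⟨k, rfl⟩ := h; rw [hap]; exact hx0 k
    · simp [hoff i h]
  have hxne : x' ≠ 0 := by
    obtain ⟨k, hk⟩ := Function.ne_iff.1 hx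
    intro h
    apply hk
    have := congrFun h (e k)
    rwa [hap] at this
  obtain ⟨i, hi1, hi2⟩ := hA x' hxne hxnn
  have hrange : ∃ k, e k = i := by
    by_contra h
    rw [hoff i h] at hi1
    exact lt_irrefl 0 hi1
  obtain ⟨k, rfl⟩ := hrange
  refine ⟨k, by rwa [hap] at hi1, ?_⟩
  have hsum : (A.submatrix e e *ᵥ x) k = (A *ᵥ x') (e k) := by
    simp only [mulVec, dotProduct, submatrix_apply]
    rw [show (∑ i, A (e k) i * x' i) = ∑ i ∈ Finset.univ.map ⟨e, he⟩, A (e k) i * x' i from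
      (Finset.sum_subset (Finset.subset_univ _) (by
        intro i _ hi
        rw [hoff i (by simpa using hi), mul_zero])).symm]
    rw [Finset.sum_map]
    simp only [Function.Embedding.coeFn_mk, hap]
  rw [hsum]; exact hi2

lemma det_ne_zero_of_strict {ι : Type*} [Fintype ι] [DecidableEq ι] {B : Matrix ι ι ℝ}
    (hZ : ∀ i j, i ≠ j → B i j ≤ 0) (hB : StrictlySemiMonotone B) : B.det ≠ 0 := by
  intro hdet
  obtain ⟨v, hv, hBv⟩ := (Matrix.exists_mulVec_eq_zero_iff).2 hdet
  -- reduce to case where v has a positive entry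
  have key : ∀ x : ι → ℝ, B *ᵥ x = 0 → ∀ i0, 0 < x i0 → False := by
    intro x hx i0 hi0
    set y : ι → ℝ := fun i => max (x i) 0 with hy
    have hyne : y ≠ 0 := by
      intro h
      have := congrFun h i0
      simp only [hy, Pi.zero_apply] at this
      have : (0:ℝ) < 0 := by
        calc (0:ℝ) < x i0 := hi0
        _ ≤ max (x i0) 0 := le_max_left _ _
        _ = 0 := this
      exact lt_irrefl 0 this
    have hynn : 0 ≤ y := fun i => le_max_right _ _
    obtain ⟨i, hyi, hByi⟩ := hB y hyne hynn
    have hxi : 0 < x i := by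
      by_contra h
      push_neg at h
      simp only [hy] at hyi
      rw [max_eq_right h] at hyi
      exact lt_irrefl 0 hyi
    have hdecomp : (B *ᵥ y) i = (B *ᵥ x) i + ∑ j, B i j * (y j - x j) := by
      simp only [mulVec, dotProduct, ← Finset.sum_add_distrib]
      exact Finset.sum_congr rfl fun j _ => by ring
    have hnonpos : ∑ j, B i j * (y j - x j) ≤ 0 := by
      apply Finset.sum_nonpos
      intro j _
      by_cases h : 0 ≤ x j
      · simp [hy, max_eq_left h]
      · push_neg at h
        have hji : j ≠ i := fun hji => absurd (hji ▸ hxi) (not_lt.2 h.le)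
        have h1 : B i j ≤ 0 := hZ i j (Ne.symm hji)
        have h2 : 0 ≤ y j - x j := by simp [hy]
        exact mul_nonpos_of_nonpos_of_nonneg h1 h2
    rw [hdecomp, hx] at hByi
    simp only [Pi.zero_apply, zero_add] at hByi
    linarith
  rcases (Function.ne_iff.1 hv) with ⟨i0, hi0⟩
  rcases lt_or_gt_of_ne (show v i0 ≠ 0 by simpa using hi0) with h | h
  · exact key (-v) (by rw [Matrix.mulVec_neg, hBv, neg_zero]) i0 (by simpa using h)
  · exact key v hBv i0 h

lemma eval_det_smul_one_add {ι : Type*} [Fintype ι] [DecidableEq ι] (B : Matrix ι ι ℝ) (t : ℝ) :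
    ((-B).charpoly).eval t = (t • (1 : Matrix ι ι ℝ) + B).det := by
  rw [Matrix.charpoly, ← Polynomial.coe_evalRingHom, RingHom.map_det]
  congr 1
  ext i j
  by_cases h : i = j
  · subst h
    simp [charmatrix_apply_eq, Matrix.one_apply_eq, mul_comm]
  · simp [charmatrix_apply_ne _ _ _ h, Matrix.one_apply_ne h]

lemma det_nonneg_of_semi {ι : Type*} [Fintype ι] [DecidableEq ι] {B : Matrix ι ι ℝ}
    (hZ : ∀ i j, i ≠ j → B i j ≤ 0) (hB : SemiMonotone B) : 0 ≤ B.det := by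
  cases isEmpty_or_nonempty ι with
  | inl h => simp [Matrix.det_isEmpty]
  | inr h =>
    set q : Polynomial ℝ := (-B).charpoly with hq
    have hstrict : ∀ t : ℝ, 0 < t → StrictlySemiMonotone (t • (1 : Matrix ι ι ℝ) + B) := by
      intro t ht x hx hx0
      obtain ⟨i, hi1, hi2⟩ := hB x hx hx0
      refine ⟨i, hi1, ?_⟩
      rw [Matrix.add_mulVec, Matrix.smul_mulVec, Matrix.one_mulVec]
      simp only [Pi.add_apply, Pi.smul_apply, smul_eq_mul]
      nlinarith
    have hZt : ∀ t : ℝ, ∀ i j : ι, i ≠ j → (t • (1 : Matrix ι ι ℝ) + B) i j ≤ 0 := by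
      intro t i j hij
      simp only [Matrix.add_apply, Matrix.smul_apply, Matrix.one_apply_ne hij, smul_eq_mul,
        mul_zero, zero_add]
      exact hZ i j hij
    have hne : ∀ t : ℝ, 0 < t → q.eval t ≠ 0 := by
      intro t ht
      rw [eval_det_smul_one_add]
      exact det_ne_zero_of_strict (hZt t) (hstrict t ht)
    have hdeg : 0 < q.degree := by
      rw [hq, Matrix.charpoly_degree_eq_dim]
      exact_mod_cast Fintype.card_pos
    have htop : Tendsto (fun t => q.eval t) atTop atTop :=
      Polynomial.tendsto_atTop_of_leadingCoeff_nonneg q hdeg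
        (by rw [(Matrix.charpoly_monic (-B)).leadingCoeff]; norm_num)
    have hpos : ∀ t : ℝ, 0 < t → 0 < q.eval t := by
      intro t ht
      rcases (hne t ht).lt_or_gt with hlt | hlt
      · exfalso
        obtain ⟨T, hT1, hT2⟩ := ((htop.eventually_ge_atTop 1).and (eventually_ge_atTop t)).exists
        have hc : (0:ℝ) ∈ Set.Icc (q.eval t) (q.eval T) := ⟨hlt.le, by linarith⟩
        obtain ⟨c, hc1, hc2⟩ := intermediate_value_Icc hT2 (q.continuous_aeval.continuousOn) hc
        exact hne c (lt_of_lt_of_le ht hc1.1) hc2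
      · exact hlt
    have hcont : Tendsto (fun t => q.eval t) (𝓝[>] (0:ℝ)) (𝓝 (q.eval 0)) :=
      ((q.continuous_aeval.tendsto 0).mono_left nhdsWithin_le_nhds)
    have h0 : 0 ≤ q.eval 0 :=
      ge_of_tendsto hcont (eventually_nhdsWithin_of_forall fun t ht => (hpos t ht).le)
    rw [eval_det_smul_one_add, zero_smul, zero_add] at h0
    exact h0


theorem stmt11 (n : ℕ) (A : Matrix (Fin n) (Fin n) ℝ)
    (hZ : ∀ i j, i ≠ j → A i j ≤ 0) (hA : SemimonotoneExactOrder A 2) :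
    ∀ s : Finset (Fin n), s.card ≤ n - 2 → 0 ≤ (PrincipalSubmatrix A s).det := by
  intro s hs
  obtain ⟨t, hst, htc⟩ := Finset.exists_superset_card_eq hs
    (by simp [Nat.sub_le])
  have hsemi : SemiMonotone (PrincipalSubmatrix A t) := hA.1 t htc
  set f : {x // x ∈ s} → {x // x ∈ t} := fun i => ⟨i.1, hst i.2⟩ with hf
  have hfinj : Function.Injective f := by
    rintro ⟨a, ha⟩ ⟨b, hb⟩ h
    simpa [hf, Subtype.ext_iff] using h
  have heq : PrincipalSubmatrix A s = (PrincipalSubmatrix A t).submatrix f f := rfl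
  have hZs : ∀ i j : {x // x ∈ s}, i ≠ j → (PrincipalSubmatrix A s) i j ≤ 0 := by
    intro i j hij
    exact hZ i.1 j.1 (fun h => hij (Subtype.ext h))
  exact det_nonneg_of_semi hZs (heq ▸ semiMonotone_submatrix hsemi hfinj)
end

section
/- Let A be an n×n real matrix and 0 ≤ k ≤ n. Then A is a semimonotone matrix of exact order k (an E0_k-matrix) if and only if its transpose Aᵀ is a semimonotone matrix of exact order k; likewise A is a strictly semimonotone matrix of exact order k (an E_k-matrix) if and only if Aᵀ is. -/
open Matrix

/-!
A nonnegative `x ≠ 0` witnessing that `A` is not (strictly) semimonotone may be taken of minimal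
support `t`. Let `(a, b)` be a saddle point of the matrix game `(y, w) ↦ wᵀ A y` on the
probability vectors supported in `t` (von Neumann's minimax theorem), with value `v`. Comparing
with `x` shows that `v` has the sign of the witness, so `a` is a witness as well, and minimality
makes `a` positive on all of `t`. Complementary slackness then forces `(Aᵀ b)_j = v` for every
`j ∈ t`, and `b` is a witness for `Aᵀ`.
-/

open Finset

section

variable {ι κ : Type*} [Fintype ι] [Fintype κ]

theorem Matrix.exists_isSaddlePointOn_dotProduct_mulVec (B : Matrix κ ι ℝ)
    {X : Set (ι → ℝ)} {Y : Set (κ → ℝ)} (neX : X.Nonempty) (cX : Convex ℝ X) (kX : IsCompact X)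
    (neY : Y.Nonempty) (cY : Convex ℝ Y) (kY : IsCompact Y) :
    ∃ a ∈ X, ∃ b ∈ Y, IsSaddlePointOn X Y (fun x y => y ⬝ᵥ B *ᵥ x) a b := by
  classical
  let f : (κ → ℝ) →ₗ[ℝ] (ι → ℝ) →ₗ[ℝ] ℝ := Matrix.toLinearMap₂' ℝ B
  have hf : ∀ x y, f y x = y ⬝ᵥ B *ᵥ x := fun x y => Matrix.toLinearMap₂'_apply' B y x
  simp_rw [← hf]
  exact Sion.exists_isSaddlePointOn neX cX kX
    (fun y _ => (f y).continuous_of_finiteDimensional.lowerSemicontinuous.lowerSemicontinuousOn _)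
    (fun y _ => ((f y).convexOn cX).quasiconvexOn) cY neY kY
    (fun x _ =>
      (f.flip x).continuous_of_finiteDimensional.upperSemicontinuous.upperSemicontinuousOn _)
    (fun x _ => ((f.flip x).concaveOn cY).quasiconcaveOn)

theorem exists_pos_and_dotProduct_le {x : ι → ℝ} (hx : x ∈ stdSimplex ℝ ι) (z : ι → ℝ) :
    ∃ i, 0 < x i ∧ x ⬝ᵥ z ≤ z i := by
  by_contra! h
  obtain ⟨i, -, hi⟩ := exists_lt_of_sum_lt (show ∑ _ : ι, (0 : ℝ) < ∑ i, x i by simp [hx.2])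
  have hle : ∀ j ∈ univ, x j * z j ≤ x j * (x ⬝ᵥ z) := fun j _ => by
    rcases (hx.1 j).lt_or_eq with hj | hj
    · exact mul_le_mul_of_nonneg_left (h j hj).le hj.le
    · simp [← hj]
  have : x ⬝ᵥ z < x ⬝ᵥ z := calc
    x ⬝ᵥ z = ∑ j, x j * z j := rfl
    _ < ∑ j, x j * (x ⬝ᵥ z) := sum_lt_sum hle ⟨i, mem_univ i, mul_lt_mul_of_pos_left (h i hi) hi⟩
    _ = x ⬝ᵥ z := by rw [← sum_mul, hx.2, one_mul]
  exact lt_irrefl _ this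

theorem eq_of_forall_le_of_dotProduct_eq {x z : ι → ℝ} {v : ℝ} (hx : x ∈ stdSimplex ℝ ι)
    (hz : ∀ i, 0 < x i → v ≤ z i) (hxz : x ⬝ᵥ z = v) : ∀ i, 0 < x i → z i = v := by
  have hterm : ∀ i ∈ univ, 0 ≤ x i * (z i - v) := fun i _ => by
    rcases (hx.1 i).lt_or_eq with hi | hi
    · exact mul_nonneg hi.le (sub_nonneg.2 (hz i hi))
    · simp [← hi]
  have hsum : ∑ i, x i * (z i - v) = 0 := by
    simp only [mul_sub, sum_sub_distrib, ← sum_mul, hx.2, one_mul]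
    exact sub_eq_zero.2 hxz
  intro i hi
  have := (sum_eq_zero_iff_of_nonneg hterm).1 hsum i (mem_univ i)
  linarith [(mul_eq_zero.1 this).resolve_left hi.ne']

def simplexOn (t : Finset ι) : Set (ι → ℝ) :=
  {x | x ∈ stdSimplex ℝ ι ∧ ∀ i ∉ t, x i = 0}

theorem convex_simplexOn (t : Finset ι) : Convex ℝ (simplexOn t) := by
  refine (convex_stdSimplex ℝ ι).inter fun x hx y hy a b _ _ _ i hi => ?_
  simp [hx i hi, hy i hi]

theorem isCompact_simplexOn (t : Finset ι) : IsCompact (simplexOn t) := by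
  refine (isCompact_stdSimplex ℝ ι).inter_right ?_
  show IsClosed {x : ι → ℝ | ∀ i ∉ t, x i = 0}
  simp only [Set.ofPred_forall]
  exact isClosed_iInter fun i => isClosed_iInter fun _ =>
    isClosed_eq (continuous_apply i) continuous_const

theorem single_mem_simplexOn [DecidableEq ι] {t : Finset ι} {i : ι} (hi : i ∈ t) :
    Pi.single i 1 ∈ simplexOn t :=
  ⟨single_mem_stdSimplex ℝ i, fun _ hj => Pi.single_eq_of_ne (ne_of_mem_of_not_mem hi hj).symm _⟩

theorem mem_simplexOn_filter_pos {x : ι → ℝ} (hx : x ∈ stdSimplex ℝ ι) :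
    x ∈ simplexOn {i | 0 < x i} :=
  ⟨hx, fun i hi => by simpa using le_antisymm (by simpa using hi) (hx.1 i)⟩

theorem mem_of_mem_simplexOn_of_pos {t : Finset ι} {x : ι → ℝ} (hx : x ∈ simplexOn t) {i : ι}
    (hi : 0 < x i) : i ∈ t := by
  by_contra hit
  exact hi.ne' (hx.2 i hit)

/-- `P` is `(· < 0)` for semimonotonicity and `(· ≤ 0)` for strict semimonotonicity. -/
def IsViolator (P : ℝ → Prop) (B : Matrix ι ι ℝ) (x : ι → ℝ) : Prop :=
  x ∈ stdSimplex ℝ ι ∧ ∀ i, 0 < x i → P ((B *ᵥ x) i)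

theorem exists_isViolator_iff {P : ℝ → Prop} (hP : ∀ ⦃c r⦄, 0 < c → P r → P (c * r))
    (B : Matrix ι ι ℝ) :
    (∃ x : ι → ℝ, x ≠ 0 ∧ 0 ≤ x ∧ ∀ i, 0 < x i → P ((B *ᵥ x) i)) ↔ ∃ x, IsViolator P B x := by
  constructor
  · rintro ⟨x, hx0, hx, hxP⟩
    have hσ : 0 < ∑ i, x i := by
      obtain ⟨i, hi⟩ := Function.ne_iff.1 hx0
      exact sum_pos' (fun i _ => hx i) ⟨i, mem_univ i, (hx i).lt_of_ne' hi⟩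
    refine ⟨(∑ i, x i)⁻¹ • x, ⟨fun i => smul_nonneg (inv_nonneg.2 hσ.le) (hx i), ?_⟩,
      fun i hi => ?_⟩
    · simp [← mul_sum, inv_mul_cancel₀ hσ.ne']
    · rw [Pi.smul_apply, smul_eq_mul, mul_pos_iff_of_pos_left (inv_pos.2 hσ)] at hi
      rw [mulVec_smul, Pi.smul_apply, smul_eq_mul]
      exact hP (inv_pos.2 hσ) (hxP i hi)
  · rintro ⟨x, hx, hxP⟩
    refine ⟨x, fun h => ?_, hx.1, hxP⟩
    simpa [h] using hx.2

theorem exists_isViolator_transpose {P : ℝ → Prop} (hP : ∀ ⦃r s⦄, r ≤ s → P s → P r)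
    {B : Matrix ι ι ℝ} (h : ∃ x, IsViolator P B x) : ∃ w, IsViolator P Bᵀ w := by
  classical
  obtain ⟨x, hx, hmin⟩ :=
    exists_minimalFor_of_wellFoundedLT (IsViolator P B) (fun y => ({i | 0 < y i} : Finset ι)) h
  set t : Finset ι := {i | 0 < x i}
  have hxt : x ∈ simplexOn t := mem_simplexOn_filter_pos hx.1
  obtain ⟨a, ha, b, hb, hab⟩ := B.exists_isSaddlePointOn_dotProduct_mulVec ⟨x, hxt⟩
    (convex_simplexOn t) (isCompact_simplexOn t) ⟨x, hxt⟩ (convex_simplexOn t)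
    (isCompact_simplexOn t)
  set v := b ⬝ᵥ B *ᵥ a
  have hv : P v := by
    obtain ⟨i, hi, hle⟩ := exists_pos_and_dotProduct_le hb.1 (B *ᵥ x)
    have hxi : 0 < x i := by simpa [t] using mem_of_mem_simplexOn_of_pos hb hi
    exact hP ((hab x hxt b hb).trans hle) (hx.2 i hxi)
  have hBa : ∀ i ∈ t, (B *ᵥ a) i ≤ v := fun i hi => by
    simpa using hab a ha (Pi.single i 1) (single_mem_simplexOn hi)
  have ha_viol : IsViolator P B a :=
    ⟨ha.1, fun i hi => hP (hBa i (mem_of_mem_simplexOn_of_pos ha hi)) hv⟩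
  have ha_pos : ∀ i ∈ t, 0 < a i := by
    have hsub : ({i | 0 < a i} : Finset ι) ⊆ t := fun i hi =>
      mem_of_mem_simplexOn_of_pos ha (by simpa using hi)
    intro i hi
    simpa using hmin ha_viol hsub hi
  have hBb : ∀ j ∈ t, v ≤ (Bᵀ *ᵥ b) j := fun j hj =>
    (hab _ (single_mem_simplexOn hj) b hb).trans_eq <| by
      dsimp only
      rw [mulVec_single_one, mulVec_transpose]
      rfl
  have hBb_eq : ∀ j, 0 < a j → (Bᵀ *ᵥ b) j = v :=
    eq_of_forall_le_of_dotProduct_eq ha.1 (fun j hj => hBb j (mem_of_mem_simplexOn_of_pos ha hj))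
      (by rw [dotProduct_mulVec, vecMul_transpose, dotProduct_comm])
  refine ⟨b, hb.1, fun j hj => ?_⟩
  rw [hBb_eq j (ha_pos j (mem_of_mem_simplexOn_of_pos hb hj))]
  exact hv

theorem exists_isViolator_transpose_iff {P : ℝ → Prop} (hP : ∀ ⦃r s⦄, r ≤ s → P s → P r)
    (B : Matrix ι ι ℝ) : (∃ w, IsViolator P Bᵀ w) ↔ ∃ x, IsViolator P B x :=
  ⟨fun h => by simpa using exists_isViolator_transpose hP h, exists_isViolator_transpose hP⟩

theorem not_semiMonotone_iff (B : Matrix ι ι ℝ) :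
    ¬ SemiMonotone B ↔ ∃ x, IsViolator (· < 0) B x := by
  rw [← exists_isViolator_iff fun _ _ hc hr => mul_neg_of_pos_of_neg hc hr]
  simp [SemiMonotone]

theorem not_strictlySemiMonotone_iff (B : Matrix ι ι ℝ) :
    ¬ StrictlySemiMonotone B ↔ ∃ x, IsViolator (· ≤ 0) B x := by
  rw [← exists_isViolator_iff fun _ _ hc hr => mul_nonpos_of_nonneg_of_nonpos hc.le hr]
  simp [StrictlySemiMonotone]

theorem semiMonotone_transpose_iff (B : Matrix ι ι ℝ) : SemiMonotone Bᵀ ↔ SemiMonotone B := by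
  rw [← not_iff_not, not_semiMonotone_iff, not_semiMonotone_iff,
    exists_isViolator_transpose_iff fun _ _ => lt_of_le_of_lt]

theorem strictlySemiMonotone_transpose_iff (B : Matrix ι ι ℝ) :
    StrictlySemiMonotone Bᵀ ↔ StrictlySemiMonotone B := by
  rw [← not_iff_not, not_strictlySemiMonotone_iff, not_strictlySemiMonotone_iff,
    exists_isViolator_transpose_iff fun _ _ => le_trans]

end

theorem principalSubmatrix_transpose {n : ℕ} (A : Matrix (Fin n) (Fin n) ℝ)
    (s : Finset (Fin n)) : PrincipalSubmatrix Aᵀ s = (PrincipalSubmatrix A s)ᵀ :=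
  rfl

theorem stmt15_general (n k : ℕ) (A : Matrix (Fin n) (Fin n) ℝ) :
    (SemimonotoneExactOrder A k ↔ SemimonotoneExactOrder Aᵀ k) ∧
    (StrictlySemimonotoneExactOrder A k ↔ StrictlySemimonotoneExactOrder Aᵀ k) := by
  simp only [SemimonotoneExactOrder, StrictlySemimonotoneExactOrder, principalSubmatrix_transpose,
    semiMonotone_transpose_iff, strictlySemiMonotone_transpose_iff, and_self]

theorem stmt15 (n k : ℕ) (hk : k ≤ n) (A : Matrix (Fin n) (Fin n) ℝ) :
    (SemimonotoneExactOrder A k ↔ SemimonotoneExactOrder Aᵀ k) ∧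
    (StrictlySemimonotoneExactOrder A k ↔ StrictlySemimonotoneExactOrder Aᵀ k) :=
  stmt15_general n k A
end

section
/- Let A be an n×n real matrix, 0 ≤ k ≤ n, and let D be an n×n diagonal matrix all of whose diagonal entries are strictly positive. Then the following are equivalent: (a) A is a semimonotone matrix of exact order k (an E0_k-matrix); (b) D·A is a semimonotone matrix of exact order k; (c) A·D is a semimonotone matrix of exact order k. The same equivalences hold with 'strictly semimonotone matrix of exact order k' (E_k-matrix) in place of 'semimonotone matrix of exact order k'. -/
open Matrix

def GSM {ι : Type*} [Fintype ι] (P : ℝ → Prop) (A : Matrix ι ι ℝ) : Prop :=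
  ∀ x : ι → ℝ, x ≠ 0 → 0 ≤ x → ∃ i, 0 < x i ∧ P (A.mulVec x i)

lemma gsm_row {ι : Type*} [Fintype ι] (P : ℝ → Prop)
    (hP : ∀ c y, 0 < c → (P (c * y) ↔ P y))
    (B : Matrix ι ι ℝ) (d : ι → ℝ) (hd : ∀ i, 0 < d i) :
    GSM P (Matrix.of fun i j => d i * B i j) ↔ GSM P B := by
  have key : ∀ x i, (Matrix.of fun i j => d i * B i j).mulVec x i = d i * B.mulVec x i := by
    intro x i
    simp [Matrix.mulVec, dotProduct, Finset.mul_sum, mul_assoc]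
  constructor <;> intro h x hx hx0 <;> obtain ⟨i, hi1, hi2⟩ := h x hx hx0 <;>
    refine ⟨i, hi1, ?_⟩
  · rw [key] at hi2; exact (hP _ _ (hd i)).mp hi2
  · rw [key]; exact (hP _ _ (hd i)).mpr hi2

lemma gsm_col {ι : Type*} [Fintype ι] (P : ℝ → Prop)
    (B : Matrix ι ι ℝ) (d : ι → ℝ) (hd : ∀ i, 0 < d i) :
    GSM P (Matrix.of fun i j => B i j * d j) ↔ GSM P B := by
  have key : ∀ x i, (Matrix.of fun i j => B i j * d j).mulVec x i
      = B.mulVec (fun j => d j * x j) i := by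
    intro x i
    simp [Matrix.mulVec, dotProduct, mul_assoc]
  constructor
  · intro h x hx hx0
    set z : ι → ℝ := fun j => x j / d j with hz
    have hz0 : 0 ≤ z := fun j => div_nonneg (hx0 j) (hd j).le
    have hzx : ∀ j, d j * z j = x j := fun j => by
      rw [hz, mul_comm]; exact div_mul_cancel₀ _ (hd j).ne'
    have hzne : z ≠ 0 := by
      intro hc
      apply hx
      funext j
      have := congrFun hc j
      simp [hz] at this
      rcases this with h1 | h1
      · exact h1
      · exact absurd h1 (hd j).ne'
    obtain ⟨i, hi1, hi2⟩ := h z hzne hz0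
    refine ⟨i, ?_, ?_⟩
    · rw [← hzx i]; exact mul_pos (hd i) hi1
    · rw [key, show (fun j => d j * z j) = x from funext hzx] at hi2; exact hi2
  · intro h x hx hx0
    set y : ι → ℝ := fun j => d j * x j with hy
    have hy0 : 0 ≤ y := fun j => mul_nonneg (hd j).le (hx0 j)
    have hyne : y ≠ 0 := by
      intro hc
      apply hx
      funext j
      have := congrFun hc j
      simp [hy] at this
      rcases this with h1 | h1
      · exact absurd h1 (hd j).ne'
      · exact h1
    obtain ⟨i, hi1, hi2⟩ := h y hyne hy0
    refine ⟨i, ?_, ?_⟩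
    · by_contra hc
      have : x i = 0 := le_antisymm (not_lt.mp hc) (hx0 i)
      simp [hy, this] at hi1
    · rw [key]; exact hi2

lemma diag_mul_entry {n : ℕ} (A D : Matrix (Fin n) (Fin n) ℝ) (hDdiag : D.IsDiag)
    (i j : Fin n) : (D * A) i j = D i i * A i j := by
  rw [Matrix.mul_apply]
  rw [Finset.sum_eq_single i]
  · intro b _ hb; rw [hDdiag hb.symm, zero_mul]
  · intro hbi; exact absurd (Finset.mem_univ i) hbi

lemma mul_diag_entry {n : ℕ} (A D : Matrix (Fin n) (Fin n) ℝ) (hDdiag : D.IsDiag)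
    (i j : Fin n) : (A * D) i j = A i j * D j j := by
  rw [Matrix.mul_apply]
  rw [Finset.sum_eq_single j]
  · intro b _ hb; rw [hDdiag hb, mul_zero]
  · intro hbj; exact absurd (Finset.mem_univ j) hbj

lemma exact_congr {n k : ℕ} {A B : Matrix (Fin n) (Fin n) ℝ}
    (h : ∀ s, SemiMonotone (PrincipalSubmatrix A s) ↔ SemiMonotone (PrincipalSubmatrix B s)) :
    SemimonotoneExactOrder A k ↔ SemimonotoneExactOrder B k := by
  unfold SemimonotoneExactOrder
  constructor <;> rintro ⟨h1, h2⟩ <;> refine ⟨fun s hs => ?_, fun s hs hc => ?_⟩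
  · exact (h s).mp (h1 s hs)
  · exact h2 s hs ((h s).mpr hc)
  · exact (h s).mpr (h1 s hs)
  · exact h2 s hs ((h s).mp hc)

lemma sexact_congr {n k : ℕ} {A B : Matrix (Fin n) (Fin n) ℝ}
    (h : ∀ s, StrictlySemiMonotone (PrincipalSubmatrix A s) ↔
        StrictlySemiMonotone (PrincipalSubmatrix B s)) :
    StrictlySemimonotoneExactOrder A k ↔ StrictlySemimonotoneExactOrder B k := by
  unfold StrictlySemimonotoneExactOrder
  constructor <;> rintro ⟨h1, h2⟩ <;> refine ⟨fun s hs => ?_, fun s hs hc => ?_⟩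
  · exact (h s).mp (h1 s hs)
  · exact h2 s hs ((h s).mpr hc)
  · exact (h s).mpr (h1 s hs)
  · exact h2 s hs ((h s).mp hc)

theorem stmt17 (n k : ℕ) (hk : k ≤ n) (A D : Matrix (Fin n) (Fin n) ℝ)
    (hDdiag : D.IsDiag) (hDpos : ∀ i, 0 < D i i) :
    ((SemimonotoneExactOrder A k ↔ SemimonotoneExactOrder (D * A) k) ∧
     (SemimonotoneExactOrder A k ↔ SemimonotoneExactOrder (A * D) k)) ∧
    ((StrictlySemimonotoneExactOrder A k ↔ StrictlySemimonotoneExactOrder (D * A) k) ∧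
     (StrictlySemimonotoneExactOrder A k ↔ StrictlySemimonotoneExactOrder (A * D) k)) := by
  have hrow : ∀ s : Finset (Fin n), PrincipalSubmatrix (D * A) s
      = Matrix.of fun (p q : s) => D (p : Fin n) (p : Fin n) * PrincipalSubmatrix A s p q := by
    intro s
    funext p q
    exact diag_mul_entry A D hDdiag p q
  have hcol : ∀ s : Finset (Fin n), PrincipalSubmatrix (A * D) s
      = Matrix.of fun (p q : s) => PrincipalSubmatrix A s p q * D (q : Fin n) (q : Fin n) := by
    intro s
    funext p q
    exact mul_diag_entry A D hDdiag p q
  have hPle : ∀ c y : ℝ, 0 < c → ((0 ≤ c * y) ↔ 0 ≤ y) := fun c y hc =>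
    mul_nonneg_iff_of_pos_left hc
  have hPlt : ∀ c y : ℝ, 0 < c → ((0 < c * y) ↔ 0 < y) := fun c y hc =>
    mul_pos_iff_of_pos_left hc
  have hsm : ∀ {ι : Type} [Fintype ι] (B : Matrix ι ι ℝ),
      SemiMonotone B ↔ GSM (fun y => 0 ≤ y) B := fun _ => Iff.rfl
  have hssm : ∀ {ι : Type} [Fintype ι] (B : Matrix ι ι ℝ),
      StrictlySemiMonotone B ↔ GSM (fun y => 0 < y) B := fun _ => Iff.rfl
  refine ⟨⟨exact_congr fun s => ?_, exact_congr fun s => ?_⟩,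
    ⟨sexact_congr fun s => ?_, sexact_congr fun s => ?_⟩⟩
  · rw [hsm, hsm, hrow s,
      gsm_row (fun y => 0 ≤ y) hPle (PrincipalSubmatrix A s) _ (fun p => hDpos p)]
  · rw [hsm, hsm, hcol s,
      gsm_col (fun y => 0 ≤ y) (PrincipalSubmatrix A s) _ (fun p => hDpos p)]
  · rw [hssm, hssm, hrow s,
      gsm_row (fun y => 0 < y) hPlt (PrincipalSubmatrix A s) _ (fun p => hDpos p)]
  · rw [hssm, hssm, hcol s,
      gsm_col (fun y => 0 < y) (PrincipalSubmatrix A s) _ (fun p => hDpos p)]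
end

section
/- Let n ≥ 3, 1 ≤ k < n, and let A be an n×n real matrix. (a) If A is a semimonotone matrix of exact order k (an E0_k-matrix), then all diagonal entries of A are nonnegative; if A is a strictly semimonotone matrix of exact order k (an E_k-matrix), then all diagonal entries of A are strictly positive. (b) If moreover n = k + 1 and A is an E0_k-matrix (resp. E_k-matrix), then all off-diagonal entries of A are strictly negative; in particular A is a Z-matrix. -/
open Matrix

lemma aux_diag_nonneg {n : ℕ} (A : Matrix (Fin n) (Fin n) ℝ) (s : Finset (Fin n))
    (h : SemiMonotone (PrincipalSubmatrix A s)) (i : Fin n) (hi : i ∈ s) : 0 ≤ A i i := by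
  classical
  obtain ⟨m, hm, hv⟩ := h (Pi.single ⟨i, hi⟩ 1)
    (by
      intro h0
      have := congrFun h0 ⟨i, hi⟩
      simp [Pi.single_eq_same] at this)
    (by
      intro j
      by_cases hj : j = ⟨i, hi⟩
      · subst hj; rw [Pi.single_eq_same]; exact zero_le_one
      · simp [Pi.single_eq_of_ne hj])
  have hme : m = ⟨i, hi⟩ := by
    by_contra hne
    rw [Pi.single_eq_of_ne hne] at hm
    exact lt_irrefl 0 hm
  subst hme
  rw [mulVec_single] at hv
  simpa [PrincipalSubmatrix] using hv

lemma aux_diag_pos {n : ℕ} (A : Matrix (Fin n) (Fin n) ℝ) (s : Finset (Fin n))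
    (h : StrictlySemiMonotone (PrincipalSubmatrix A s)) (i : Fin n) (hi : i ∈ s) :
    0 < A i i := by
  classical
  obtain ⟨m, hm, hv⟩ := h (Pi.single ⟨i, hi⟩ 1)
    (by
      intro h0
      have := congrFun h0 ⟨i, hi⟩
      simp [Pi.single_eq_same] at this)
    (by
      intro j
      by_cases hj : j = ⟨i, hi⟩
      · subst hj; rw [Pi.single_eq_same]; exact zero_le_one
      · simp [Pi.single_eq_of_ne hj])
  have hme : m = ⟨i, hi⟩ := by
    by_contra hne
    rw [Pi.single_eq_of_ne hne] at hm
    exact lt_irrefl 0 hm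
  subst hme
  rw [mulVec_single] at hv
  simpa [PrincipalSubmatrix] using hv

lemma aux_pair_mulVec {n : ℕ} (A : Matrix (Fin n) (Fin n) ℝ) (i j : Fin n) (hij : i ≠ j)
    (x : ({i, j} : Finset (Fin n)) → ℝ) (p : ({i, j} : Finset (Fin n))) :
    (PrincipalSubmatrix A {i, j}).mulVec x p =
      A (p : Fin n) i * x ⟨i, by simp⟩ + A (p : Fin n) j * x ⟨j, by simp⟩ := by
  classical
  set εi : ({i, j} : Finset (Fin n)) := ⟨i, by simp⟩
  set εj : ({i, j} : Finset (Fin n)) := ⟨j, by simp⟩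
  have huniv : (Finset.univ : Finset ({i, j} : Finset (Fin n))) = {εi, εj} := by
    ext m
    simp only [Finset.mem_univ, true_iff, Finset.mem_insert, Finset.mem_singleton]
    have hm := m.2
    simp only [Finset.mem_insert, Finset.mem_singleton] at hm
    rcases hm with hm | hm
    · left; exact Subtype.ext hm
    · right; exact Subtype.ext hm
  have hne : εi ≠ εj := fun h => hij (by simpa [εi, εj, Subtype.ext_iff] using h)
  rw [mulVec, dotProduct, huniv, Finset.sum_pair hne]
  rfl

lemma aux_offdiag_neg {n : ℕ} (A : Matrix (Fin n) (Fin n) ℝ) (i j : Fin n) (hij : i ≠ j)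
    (hii : 0 ≤ A i i) (hjj : 0 ≤ A j j)
    (h : ¬ SemiMonotone (PrincipalSubmatrix A {i, j})) : A i j < 0 := by
  classical
  rw [SemiMonotone] at h
  push_neg at h
  obtain ⟨x, hx0, hxnn, hall⟩ := h
  set εi : ({i, j} : Finset (Fin n)) := ⟨i, by simp⟩
  set εj : ({i, j} : Finset (Fin n)) := ⟨j, by simp⟩
  have hcases : ∀ m : ({i, j} : Finset (Fin n)), m = εi ∨ m = εj := by
    rintro ⟨m, hm⟩
    simp only [Finset.mem_insert, Finset.mem_singleton] at hm
    rcases hm with hm | hm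
    · left; exact Subtype.ext hm
    · right; exact Subtype.ext hm
  have hxi : 0 ≤ x εi := hxnn εi
  have hxj : 0 ≤ x εj := hxnn εj
  have hsum : ¬ (x εi = 0 ∧ x εj = 0) := by
    rintro ⟨h1, h2⟩
    apply hx0
    funext m
    rcases hcases m with hm | hm <;> simp [hm, h1, h2]
  have hmi := aux_pair_mulVec A i j hij x εi
  have hmj := aux_pair_mulVec A i j hij x εj
  have hi0 : 0 < x εi := by
    rcases hxi.lt_or_eq with h' | h'
    · exact h'
    · exfalso
      have hj0 : 0 < x εj := by
        rcases hxj.lt_or_eq with h'' | h''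
        · exact h''
        · exact absurd ⟨h'.symm, h''.symm⟩ hsum
      have hthis := hall εj hj0
      have key : A j i * x εi + A j j * x εj < 0 := by
        rw [hmj] at hthis; exact hthis
      have h1 : A j i * x εi = 0 := by rw [← h', mul_zero]
      have h2 := mul_nonneg hjj hxj
      linarith
  -- similarly x εj > 0
  have hj0 : 0 < x εj := by
    rcases hxj.lt_or_eq with h' | h'
    · exact h'
    · exfalso
      have hthis := hall εi hi0
      have key : A i i * x εi + A i j * x εj < 0 := by
        rw [hmi] at hthis; exact hthis
      have h1 : A i j * x εj = 0 := by rw [← h', mul_zero]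
      have h2 := mul_nonneg hii hxi
      linarith
  have := hall εi hi0
  have key : A i i * x εi + A i j * x εj < 0 := by
    rw [hmi] at this; exact this
  nlinarith [mul_nonneg hii hxi]

lemma aux_offdiag_neg' {n : ℕ} (A : Matrix (Fin n) (Fin n) ℝ) (i j : Fin n) (hij : i ≠ j)
    (hii : 0 < A i i) (hjj : 0 < A j j)
    (h : ¬ StrictlySemiMonotone (PrincipalSubmatrix A {i, j})) : A i j < 0 := by
  classical
  rw [StrictlySemiMonotone] at h
  push_neg at h
  obtain ⟨x, hx0, hxnn, hall⟩ := h
  set εi : ({i, j} : Finset (Fin n)) := ⟨i, by simp⟩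
  set εj : ({i, j} : Finset (Fin n)) := ⟨j, by simp⟩
  have hcases : ∀ m : ({i, j} : Finset (Fin n)), m = εi ∨ m = εj := by
    rintro ⟨m, hm⟩
    simp only [Finset.mem_insert, Finset.mem_singleton] at hm
    rcases hm with hm | hm
    · left; exact Subtype.ext hm
    · right; exact Subtype.ext hm
  have hxi : 0 ≤ x εi := hxnn εi
  have hxj : 0 ≤ x εj := hxnn εj
  have hsum : ¬ (x εi = 0 ∧ x εj = 0) := by
    rintro ⟨h1, h2⟩
    apply hx0
    funext m
    rcases hcases m with hm | hm <;> simp [hm, h1, h2]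
  have hmi := aux_pair_mulVec A i j hij x εi
  have hmj := aux_pair_mulVec A i j hij x εj
  have hi0 : 0 < x εi := by
    rcases hxi.lt_or_eq with h' | h'
    · exact h'
    · exfalso
      have hj0 : 0 < x εj := by
        rcases hxj.lt_or_eq with h'' | h''
        · exact h''
        · exact absurd ⟨h'.symm, h''.symm⟩ hsum
      have hthis := hall εj hj0
      have key : A j i * x εi + A j j * x εj ≤ 0 := by
        rw [hmj] at hthis; exact hthis
      have h1 : A j i * x εi = 0 := by rw [← h', mul_zero]
      have h2 := mul_pos hjj hj0
      linarith
  have hj0 : 0 < x εj := by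
    rcases hxj.lt_or_eq with h' | h'
    · exact h'
    · exfalso
      have hthis := hall εi hi0
      have key : A i i * x εi + A i j * x εj ≤ 0 := by
        rw [hmi] at hthis; exact hthis
      have h1 : A i j * x εj = 0 := by rw [← h', mul_zero]
      have h2 := mul_pos hii hi0
      linarith
  have := hall εi hi0
  have key : A i i * x εi + A i j * x εj ≤ 0 := by
    rw [hmi] at this; exact this
  nlinarith [mul_pos hii hi0]

theorem stmt18 (n k : ℕ) (hn : 3 ≤ n) (hk1 : 1 ≤ k) (hkn : k < n)
    (A : Matrix (Fin n) (Fin n) ℝ) :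
    ((SemimonotoneExactOrder A k → ∀ i, 0 ≤ A i i) ∧
     (StrictlySemimonotoneExactOrder A k → ∀ i, 0 < A i i)) ∧
    (n = k + 1 →
      (SemimonotoneExactOrder A k → ∀ i j, i ≠ j → A i j < 0) ∧
      (StrictlySemimonotoneExactOrder A k → ∀ i j, i ≠ j → A i j < 0)) := by
  classical
  have hcard : ∀ i : Fin n, ∃ s : Finset (Fin n), i ∈ s ∧ s.card = n - k := by
    intro i
    obtain ⟨u, hu1, _, hu3⟩ := Finset.exists_subsuperset_card_eq (n := n - k)
      (Finset.subset_univ ({i} : Finset (Fin n)))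
      (by rw [Finset.card_singleton]; omega)
      (by rw [Finset.card_univ, Fintype.card_fin]; omega)
    exact ⟨u, hu1 (Finset.mem_singleton_self i), hu3⟩
  refine ⟨⟨?_, ?_⟩, ?_⟩
  · intro hA i
    obtain ⟨s, hi, hs⟩ := hcard i
    exact aux_diag_nonneg A s (hA.1 s hs) i hi
  · intro hA i
    obtain ⟨s, hi, hs⟩ := hcard i
    exact aux_diag_pos A s (hA.1 s hs) i hi
  · intro hnk
    have hnk1 : n - k = 1 := by omega
    constructor
    · intro hA i j hij
      have hii : 0 ≤ A i i := by
        obtain ⟨s, hi, hs⟩ := hcard i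
        exact aux_diag_nonneg A s (hA.1 s hs) i hi
      have hjj : 0 ≤ A j j := by
        obtain ⟨s, hjm, hs⟩ := hcard j
        exact aux_diag_nonneg A s (hA.1 s hs) j hjm
      refine aux_offdiag_neg A i j hij hii hjj (hA.2 {i, j} ?_)
      rw [Finset.card_insert_of_notMem (by simpa using hij), Finset.card_singleton]
      omega
    · intro hA i j hij
      have hii : 0 < A i i := by
        obtain ⟨s, hi, hs⟩ := hcard i
        exact aux_diag_pos A s (hA.1 s hs) i hi
      have hjj : 0 < A j j := by
        obtain ⟨s, hjm, hs⟩ := hcard j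
        exact aux_diag_pos A s (hA.1 s hs) j hjm
      refine aux_offdiag_neg' A i j hij hii hjj (hA.2 {i, j} ?_)
      rw [Finset.card_insert_of_notMem (by simpa using hij), Finset.card_singleton]
      omega
end

section
/- Let A be a symmetric n×n real matrix and 0 ≤ k ≤ n. Then A is a copositive matrix of exact order k if and only if A is a semimonotone matrix of exact order k; likewise A is a strictly copositive matrix of exact order k if and only if A is a strictly semimonotone matrix of exact order k. -/
open Matrix

/-- A real square matrix `A` is copositive if `xᵀ A x ≥ 0` for all entrywise-nonnegative `x`. -/
def Copositive {ι : Type*} [Fintype ι] (A : Matrix ι ι ℝ) : Prop :=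
  ∀ x : ι → ℝ, 0 ≤ x → 0 ≤ x ⬝ᵥ A.mulVec x

/-- A real square matrix `A` is strictly copositive if `xᵀ A x > 0` for all nonzero
entrywise-nonnegative `x`. -/
def StrictlyCopositive {ι : Type*} [Fintype ι] (A : Matrix ι ι ℝ) : Prop :=
  ∀ x : ι → ℝ, x ≠ 0 → 0 ≤ x → 0 < x ⬝ᵥ A.mulVec x

/-- `A` is a copositive matrix of exact order `k`. -/
def CopositiveExactOrder {n : ℕ} (A : Matrix (Fin n) (Fin n) ℝ) (k : ℕ) : Prop :=
  (∀ s : Finset (Fin n), s.card = n - k → Copositive (PrincipalSubmatrix A s)) ∧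
  (∀ s : Finset (Fin n), n - k < s.card → ¬ Copositive (PrincipalSubmatrix A s))

/-- `A` is a strictly copositive matrix of exact order `k`. -/
def StrictlyCopositiveExactOrder {n : ℕ} (A : Matrix (Fin n) (Fin n) ℝ) (k : ℕ) : Prop :=
  (∀ s : Finset (Fin n), s.card = n - k → StrictlyCopositive (PrincipalSubmatrix A s)) ∧
  (∀ s : Finset (Fin n), n - k < s.card → ¬ StrictlyCopositive (PrincipalSubmatrix A s))

/-!
For symmetric `B`, let `z` minimize `q y = yᵀ B y` on the standard simplex. Moving mass `t` from a
coordinate `i` with `z i > 0` to any `j` stays in the simplex for small `t`, so optimality gives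
`(B z) i ≤ (B z) j` for all `j`, and averaging against `z` gives `(B z) i ≤ q z`. Semimonotonicity
applied to `z` yields such an `i` with `(B z) i ≥ 0` (resp. `> 0`), hence `q ≥ 0` (resp. `> 0`) on
the simplex, which by homogeneity is (strict) copositivity. The converse needs no symmetry, since
`xᵀ B x = ∑ i, x i * (B x) i`. Principal submatrices of a symmetric matrix are symmetric, so the
equivalence holds submatrix by submatrix and thus for the exact-order notions.
-/

section QuadraticFormOnSimplex

variable {ι : Type*} [Fintype ι]

theorem nonempty_of_mem_stdSimplex {y : ι → ℝ} (hy : y ∈ stdSimplex ℝ ι) : Nonempty ι := by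
  by_contra h
  have := hy.2
  simp_all [not_nonempty_iff]

theorem ne_zero_of_mem_stdSimplex {y : ι → ℝ} (hy : y ∈ stdSimplex ℝ ι) : y ≠ 0 := by
  rintro rfl
  simpa using hy.2

theorem exists_pos_smul_mem_stdSimplex {x : ι → ℝ} (hx0 : x ≠ 0) (hx : 0 ≤ x) :
    ∃ S : ℝ, 0 < S ∧ S⁻¹ • x ∈ stdSimplex ℝ ι := by
  have hS : 0 < ∑ l, x l := by
    obtain ⟨i, hi⟩ := Function.ne_iff.mp hx0
    exact Finset.sum_pos' (fun l _ => hx l) ⟨i, Finset.mem_univ i, (hx i).lt_of_ne' hi⟩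
  refine ⟨_, hS, fun l => smul_nonneg (inv_nonneg.mpr hS.le) (hx l), ?_⟩
  simp only [Pi.smul_apply, smul_eq_mul, ← Finset.mul_sum, inv_mul_cancel₀ hS.ne']

theorem smul_dotProduct_mulVec_smul (B : Matrix ι ι ℝ) (c : ℝ) (x : ι → ℝ) :
    (c • x) ⬝ᵥ B *ᵥ (c • x) = c ^ 2 * (x ⬝ᵥ B *ᵥ x) := by
  simp only [mulVec_smul, dotProduct_smul, smul_dotProduct, smul_eq_mul]
  ring

theorem copositive_of_forall_mem_stdSimplex {B : Matrix ι ι ℝ}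
    (h : ∀ y ∈ stdSimplex ℝ ι, 0 ≤ y ⬝ᵥ B *ᵥ y) : Copositive B := by
  intro x hx
  rcases eq_or_ne x 0 with rfl | hx0
  · simp
  obtain ⟨S, hS, hy⟩ := exists_pos_smul_mem_stdSimplex hx0 hx
  have := h _ hy
  rw [smul_dotProduct_mulVec_smul] at this
  exact nonneg_of_mul_nonneg_right this (by positivity)

theorem strictlyCopositive_of_forall_mem_stdSimplex {B : Matrix ι ι ℝ}
    (h : ∀ y ∈ stdSimplex ℝ ι, 0 < y ⬝ᵥ B *ᵥ y) : StrictlyCopositive B := by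
  intro x hx0 hx
  obtain ⟨S, hS, hy⟩ := exists_pos_smul_mem_stdSimplex hx0 hx
  have := h _ hy
  rw [smul_dotProduct_mulVec_smul] at this
  exact pos_of_mul_pos_right this (by positivity)

theorem exists_isMinOn_stdSimplex [Nonempty ι] (B : Matrix ι ι ℝ) :
    ∃ z ∈ stdSimplex ℝ ι, IsMinOn (fun y => y ⬝ᵥ B *ᵥ y) (stdSimplex ℝ ι) z := by
  classical
  exact (isCompact_stdSimplex ℝ ι).exists_isMinOn
    ⟨_, single_mem_stdSimplex ℝ (Classical.arbitrary ι)⟩ (by fun_prop)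

theorem nonneg_of_forall_mul_add_sq_mul_nonneg {c e δ : ℝ} (hδ : 0 < δ)
    (h : ∀ t ∈ Set.Ioc 0 δ, 0 ≤ t * c + t ^ 2 * e) : 0 ≤ c := by
  have hlim : Filter.Tendsto (fun t => c + t * e) (nhdsWithin 0 (Set.Ioi 0)) (nhds c) := by
    have : Continuous fun t : ℝ => c + t * e := by fun_prop
    simpa using (this.tendsto 0).mono_left nhdsWithin_le_nhds
  refine ge_of_tendsto hlim ?_
  filter_upwards [Ioc_mem_nhdsGT hδ] with t ht
  have := h t ht
  nlinarith [ht.1]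

variable [DecidableEq ι]

theorem mem_stdSimplex_add_smul_single_sub_single {z : ι → ℝ} (hz : z ∈ stdSimplex ℝ ι)
    (i j : ι) {t : ℝ} (ht : t ∈ Set.Icc 0 (z i)) :
    z + t • (Pi.single j 1 - Pi.single i 1) ∈ stdSimplex ℝ ι := by
  refine ⟨fun l => ?_, ?_⟩
  · have := hz.1 l
    simp only [Pi.add_apply, Pi.smul_apply, Pi.sub_apply, Pi.single_apply, smul_eq_mul]
    split_ifs with hlj hli <;> subst_vars <;> nlinarith [ht.1, ht.2]
  · simp [Finset.sum_add_distrib, ← Finset.mul_sum, Finset.sum_sub_distrib, hz.2]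

theorem mulVec_apply_le_of_isMinOn_stdSimplex {B : Matrix ι ι ℝ} (hB : B.IsSymm) {z : ι → ℝ}
    (hz : z ∈ stdSimplex ℝ ι) (hmin : IsMinOn (fun y => y ⬝ᵥ B *ᵥ y) (stdSimplex ℝ ι) z)
    {i : ι} (hi : 0 < z i) : (B *ᵥ z) i ≤ z ⬝ᵥ B *ᵥ z := by
  have hle : ∀ j, (B *ᵥ z) i ≤ (B *ᵥ z) j := by
    intro j
    set d : ι → ℝ := Pi.single j 1 - Pi.single i 1
    have hexp : ∀ t : ℝ, (z + t • d) ⬝ᵥ B *ᵥ (z + t • d)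
        = z ⬝ᵥ B *ᵥ z + t * (2 * (d ⬝ᵥ B *ᵥ z)) + t ^ 2 * (d ⬝ᵥ B *ᵥ d) := by
      intro t
      have hzd : z ⬝ᵥ B *ᵥ d = d ⬝ᵥ B *ᵥ z := by
        rw [dotProduct_mulVec, ← mulVec_transpose, hB.eq, dotProduct_comm]
      simp only [mulVec_add, mulVec_smul, dotProduct_add, add_dotProduct, dotProduct_smul,
        smul_dotProduct, smul_eq_mul, hzd]
      ring
    have hc : 0 ≤ 2 * (d ⬝ᵥ B *ᵥ z) := by
      refine nonneg_of_forall_mul_add_sq_mul_nonneg (e := d ⬝ᵥ B *ᵥ d) hi fun t ht => ?_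
      have : z ⬝ᵥ B *ᵥ z ≤ (z + t • d) ⬝ᵥ B *ᵥ (z + t • d) :=
        hmin (mem_stdSimplex_add_smul_single_sub_single hz i j ⟨ht.1.le, ht.2⟩)
      rw [hexp] at this
      linarith
    simp only [d, sub_dotProduct, single_one_dotProduct] at hc
    linarith
  calc (B *ᵥ z) i = ∑ l, z l * (B *ᵥ z) i := by rw [← Finset.sum_mul, hz.2, one_mul]
    _ ≤ ∑ l, z l * (B *ᵥ z) l :=
      Finset.sum_le_sum fun l _ => mul_le_mul_of_nonneg_left (hle l) (hz.1 l)
    _ = z ⬝ᵥ B *ᵥ z := rfl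

end QuadraticFormOnSimplex

section CopositiveSemimonotone

variable {ι : Type*} [Fintype ι] {B : Matrix ι ι ℝ}

theorem Copositive.semiMonotone (h : Copositive B) : SemiMonotone B := by
  intro x hx0 hx
  by_contra! hneg
  have hle : x ⬝ᵥ B *ᵥ x < 0 := by
    obtain ⟨i, hi⟩ := Function.ne_iff.mp hx0
    have hi : 0 < x i := (hx i).lt_of_ne' hi
    refine Finset.sum_neg' (fun l _ => ?_)
      ⟨i, Finset.mem_univ i, mul_neg_of_pos_of_neg hi (hneg i hi)⟩
    rcases (hx l).eq_or_lt with hl | hl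
    · simp [← hl]
    · exact (mul_neg_of_pos_of_neg hl (hneg l hl)).le
  exact hle.not_ge (h x hx)

theorem StrictlyCopositive.strictlySemiMonotone (h : StrictlyCopositive B) :
    StrictlySemiMonotone B := by
  intro x hx0 hx
  by_contra! hneg
  have hle : x ⬝ᵥ B *ᵥ x ≤ 0 := Finset.sum_nonpos fun l _ => by
    rcases (hx l).eq_or_lt with hl | hl
    · simp [← hl]
    · exact mul_nonpos_of_nonneg_of_nonpos hl.le (hneg l hl)
  exact hle.not_gt (h x hx0 hx)

theorem SemiMonotone.copositive (hB : B.IsSymm) (h : SemiMonotone B) : Copositive B := by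
  classical
  refine copositive_of_forall_mem_stdSimplex fun y hy => ?_
  have := nonempty_of_mem_stdSimplex hy
  obtain ⟨z, hz, hmin⟩ := exists_isMinOn_stdSimplex B
  obtain ⟨i, hzi, hBzi⟩ := h z (ne_zero_of_mem_stdSimplex hz) hz.1
  exact (hBzi.trans (mulVec_apply_le_of_isMinOn_stdSimplex hB hz hmin hzi)).trans (hmin hy)

theorem StrictlySemiMonotone.strictlyCopositive (hB : B.IsSymm) (h : StrictlySemiMonotone B) :
    StrictlyCopositive B := by
  classical
  refine strictlyCopositive_of_forall_mem_stdSimplex fun y hy => ?_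
  have := nonempty_of_mem_stdSimplex hy
  obtain ⟨z, hz, hmin⟩ := exists_isMinOn_stdSimplex B
  obtain ⟨i, hzi, hBzi⟩ := h z (ne_zero_of_mem_stdSimplex hz) hz.1
  exact (hBzi.trans_le (mulVec_apply_le_of_isMinOn_stdSimplex hB hz hmin hzi)).trans_le (hmin hy)

theorem Matrix.IsSymm.copositive_iff_semiMonotone (hB : B.IsSymm) :
    Copositive B ↔ SemiMonotone B :=
  ⟨Copositive.semiMonotone, SemiMonotone.copositive hB⟩

theorem Matrix.IsSymm.strictlyCopositive_iff_strictlySemiMonotone (hB : B.IsSymm) :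
    StrictlyCopositive B ↔ StrictlySemiMonotone B :=
  ⟨StrictlyCopositive.strictlySemiMonotone, StrictlySemiMonotone.strictlyCopositive hB⟩

end CopositiveSemimonotone

theorem stmt19_general (n k : ℕ) (A : Matrix (Fin n) (Fin n) ℝ)
    (hsymm : A.IsSymm) :
    (CopositiveExactOrder A k ↔ SemimonotoneExactOrder A k) ∧
    (StrictlyCopositiveExactOrder A k ↔ StrictlySemimonotoneExactOrder A k) := by
  have hsub (s : Finset (Fin n)) : (PrincipalSubmatrix A s).IsSymm := hsymm.submatrix _
  simp only [CopositiveExactOrder, SemimonotoneExactOrder, StrictlyCopositiveExactOrder,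
    StrictlySemimonotoneExactOrder, (hsub _).copositive_iff_semiMonotone,
    (hsub _).strictlyCopositive_iff_strictlySemiMonotone, and_self]

theorem stmt19 (n k : ℕ) (hk : k ≤ n) (A : Matrix (Fin n) (Fin n) ℝ)
    (hsymm : A.IsSymm) :
    (CopositiveExactOrder A k ↔ SemimonotoneExactOrder A k) ∧
    (StrictlyCopositiveExactOrder A k ↔ StrictlySemimonotoneExactOrder A k) :=
  stmt19_general n k A hsymm
end
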